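/- arXiv:1602.00924 — 8 statements merged into one kernel-verified Lean document; each statement's English description precedes it below -/
import Mathlib

section
/- Let c ≥ 0 and let (n_q)_{q∈ℕ} be a sequence of natural numbers with n_q ≤ q for all q and n_q²/q → c as q → ∞. Then the ratio of binomial coefficients C(2q, q−n_q) / C(2q, q) converges to exp(−c) as q → ∞. -/
/-!
Writing `C(2q, q-n) / C(2q, q) = ∏_{j<n} (q-j)/(q+j+1)` and using `1 - x ≤ exp(-x) ≤ 1/(1+x)`
on each factor squeezes the ratio between `exp(-n²/(q-n+1))` and `exp(-n²/(q+n))`, since the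
odd numbers `2j+1`, `j < n`, sum to `n²`. Both exponents tend to `-c` because `n_q/q → 0`.
-/

open Filter Finset Real Topology

lemma sum_range_two_mul_add_one (n : ℕ) : ∑ j ∈ range n, (2 * (j : ℝ) + 1) = n ^ 2 := by
  induction n with
  | zero => simp
  | succ m ih => rw [sum_range_succ, ih]; push_cast; ring

lemma exp_neg_sq_div_eq_prod (n : ℕ) (D : ℝ) :
    exp (-(n ^ 2 / D)) = ∏ j ∈ range n, exp (-((2 * j + 1) / D)) := by
  rw [← exp_sum, sum_neg_distrib, ← sum_div, sum_range_two_mul_add_one]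

lemma choose_sub_div_choose_central (q n : ℕ) (h : n ≤ q) :
    ((2 * q).choose (q - n) : ℝ) / (2 * q).choose q =
      ∏ j ∈ range n, ((q : ℝ) - j) / (q + j + 1) := by
  induction n with
  | zero =>
    have : ((2 * q).choose q : ℝ) ≠ 0 := by exact_mod_cast (Nat.choose_pos (by omega)).ne'
    simp [this]
  | succ m ih =>
    have hm : m ≤ q := by omega
    have key := Nat.choose_succ_right_eq (2 * q) (q - (m + 1))
    rw [show q - (m + 1) + 1 = q - m by omega, show 2 * q - (q - (m + 1)) = q + m + 1 by omega]
      at key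
    have hkey : ((2 * q).choose (q - (m + 1)) : ℝ) =
        (2 * q).choose (q - m) * ((q - m) / (q + m + 1)) := by
      have := congrArg (Nat.cast : ℕ → ℝ) key
      push_cast [Nat.cast_sub hm] at this
      field_simp
      linarith
    rw [prod_range_succ, ← ih hm, hkey, mul_div_right_comm]

lemma factor_bounds {q n j : ℕ} (h : n ≤ q) (hj : j < n) :
    exp (-((2 * j + 1) / ((q : ℝ) - n + 1))) ≤ ((q : ℝ) - j) / (q + j + 1) ∧
      ((q : ℝ) - j) / (q + j + 1) ≤ exp (-((2 * j + 1) / ((q : ℝ) + n))) := by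
  have hjn : (j : ℝ) + 1 ≤ n := by exact_mod_cast hj
  have hnq : (n : ℝ) ≤ q := by exact_mod_cast h
  have hqj : (0 : ℝ) < q - j := by linarith
  have hqjn : (q : ℝ) - n + 1 ≤ q - j := by linarith
  have hjqn : (q : ℝ) + j + 1 ≤ q + n := by linarith
  constructor
  · set t := (2 * (j : ℝ) + 1) / (q - j)
    calc exp (-((2 * j + 1) / ((q : ℝ) - n + 1)))
        ≤ exp (-t) := exp_le_exp.mpr (neg_le_neg
          (div_le_div_of_nonneg_left (by positivity) (by linarith) hqjn))
      _ = (exp t)⁻¹ := exp_neg t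
      _ ≤ (t + 1)⁻¹ := inv_anti₀ (by positivity) (add_one_le_exp t)
      _ = ((q : ℝ) - j) / (q + j + 1) := by
          simp only [t]
          field_simp
          ring
  · calc ((q : ℝ) - j) / (q + j + 1) = 1 - (2 * j + 1) / ((q : ℝ) + j + 1) := by
          field_simp; ring
      _ ≤ exp (-((2 * j + 1) / ((q : ℝ) + j + 1))) := one_sub_le_exp_neg _
      _ ≤ exp (-((2 * j + 1) / ((q : ℝ) + n))) := exp_le_exp.mpr (neg_le_neg
          (div_le_div_of_nonneg_left (by positivity) (by positivity) hjqn))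

lemma exp_neg_sq_div_le_choose_ratio (q n : ℕ) (h : n ≤ q) :
    exp (-(n ^ 2 / ((q : ℝ) - n + 1))) ≤ ((2 * q).choose (q - n) : ℝ) / (2 * q).choose q := by
  rw [choose_sub_div_choose_central q n h, exp_neg_sq_div_eq_prod]
  exact prod_le_prod (fun _ _ => (exp_pos _).le)
    fun _ hj => (factor_bounds h (mem_range.mp hj)).1

lemma choose_ratio_le_exp_neg_sq_div (q n : ℕ) (h : n ≤ q) :
    ((2 * q).choose (q - n) : ℝ) / (2 * q).choose q ≤ exp (-(n ^ 2 / ((q : ℝ) + n))) := by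
  rw [choose_sub_div_choose_central q n h, exp_neg_sq_div_eq_prod]
  refine prod_le_prod (fun j hj => ?_) fun _ hj => (factor_bounds h (mem_range.mp hj)).2
  have : (j : ℝ) ≤ q := by exact_mod_cast (mem_range.mp hj).le.trans h
  exact div_nonneg (by linarith) (by positivity)

lemma tendsto_div_natCast_of_tendsto_sq_div {x : ℕ → ℝ} {c : ℝ}
    (hx : Tendsto (fun q : ℕ => x q ^ 2 / q) atTop (𝓝 c)) :
    Tendsto (fun q : ℕ => x q / q) atTop (𝓝 0) := by
  have hinv : Tendsto (fun q : ℕ => (q : ℝ)⁻¹) atTop (𝓝 0) :=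
    tendsto_inv_atTop_zero.comp tendsto_natCast_atTop_atTop
  have hprod : Tendsto (fun q : ℕ => x q ^ 2 / q * (q : ℝ)⁻¹) atTop (𝓝 0) := by
    simpa using hx.mul hinv
  have hsq : Tendsto (fun q : ℕ => (x q / q) ^ 2) atTop (𝓝 0) :=
    hprod.congr fun q => by ring
  rw [tendsto_zero_iff_abs_tendsto_zero]
  simpa only [Function.comp_def, sqrt_sq_eq_abs, sqrt_zero] using hsq.sqrt

lemma tendsto_div_add_of_tendsto_div {a s : ℕ → ℝ} {c : ℝ}
    (ha : Tendsto (fun q : ℕ => a q / q) atTop (𝓝 c))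
    (hs : Tendsto (fun q : ℕ => s q / q) atTop (𝓝 0)) :
    Tendsto (fun q : ℕ => a q / (q + s q)) atTop (𝓝 c) := by
  have hden : Tendsto (fun q : ℕ => 1 + s q / q) atTop (𝓝 1) := by
    simpa using hs.const_add 1
  refine (by simpa using ha.div hden one_ne_zero : Tendsto _ _ (𝓝 c)).congr' ?_
  filter_upwards [eventually_ne_atTop 0] with q hq0
  have hq : (q : ℝ) ≠ 0 := by exact_mod_cast hq0
  simp only [Pi.div_apply]
  field_simp

theorem stmt_2_general (c : ℝ) (n : ℕ → ℕ) (hn : ∀ q, n q ≤ q)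
    (hlim : Tendsto (fun q : ℕ => ((n q : ℝ))^2 / (q : ℝ)) atTop (nhds c)) :
    Tendsto (fun q : ℕ => (((2*q).choose (q - n q) : ℝ)) / ((2*q).choose q : ℝ))
      atTop (nhds (Real.exp (-c))) := by
  have hfrac := tendsto_div_natCast_of_tendsto_sq_div hlim
  have hinv : Tendsto (fun q : ℕ => 1 / (q : ℝ)) atTop (𝓝 0) :=
    tendsto_one_div_atTop_nhds_zero_nat
  have hlow : Tendsto (fun q : ℕ => (n q : ℝ) ^ 2 / (q - n q + 1)) atTop (𝓝 c) := by
    refine (tendsto_div_add_of_tendsto_div (s := fun q => 1 - n q) hlim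
      (by simpa [sub_div] using hinv.sub hfrac)).congr fun q => ?_
    ring
  have hup := tendsto_div_add_of_tendsto_div hlim hfrac
  exact tendsto_of_tendsto_of_tendsto_of_le_of_le
    ((continuous_exp.tendsto _).comp hlow.neg) ((continuous_exp.tendsto _).comp hup.neg)
    (fun q => exp_neg_sq_div_le_choose_ratio q (n q) (hn q))
    (fun q => choose_ratio_le_exp_neg_sq_div q (n q) (hn q))

/-- If `n_q ≤ q` and `n_q²/q → c ≥ 0`, then `C(2q, q−n_q)/C(2q, q) → exp(−c)`. -/
theorem stmt_2 (c : ℝ) (hc : 0 ≤ c) (n : ℕ → ℕ) (hn : ∀ q, n q ≤ q)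
    (hlim : Tendsto (fun q : ℕ => ((n q : ℝ))^2 / (q : ℝ)) atTop (nhds c)) :
    Tendsto (fun q : ℕ => (((2*q).choose (q - n q) : ℝ)) / ((2*q).choose q : ℝ))
      atTop (nhds (Real.exp (-c))) :=
  stmt_2_general c n hn hlim
end

section
/- For all natural numbers n, q with 1 ≤ n ≤ q, the ratio of binomial coefficients satisfies C(2q, q−n) / C(2q, q) ≤ exp(−n²/(q+n)). -/
/-- For `1 ≤ n ≤ q`, `C(2q, q−n)/C(2q, q) ≤ exp(−n²/(q+n))`. -/
theorem stmt_3 (n q : ℕ) (h1 : 1 ≤ n) (h2 : n ≤ q) :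
    (((2*q).choose (q - n) : ℝ)) / ((2*q).choose q : ℝ) ≤
      Real.exp (-((n : ℝ))^2 / ((q : ℝ) + (n : ℝ))) := by
  clear h1
  have hcq : (0:ℝ) < ((2*q).choose q : ℝ) := by
    exact_mod_cast Nat.choose_pos (by omega)
  have main : ∀ m : ℕ, m ≤ q →
      (((2*q).choose (q - m) : ℝ)) / ((2*q).choose q : ℝ) ≤
        Real.exp (-((m : ℝ))^2 / ((q : ℝ) + (m : ℝ))) := by
    intro m
    induction m with
    | zero =>
      intro _
      rw [Nat.sub_zero, div_self (ne_of_gt hcq)]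
      simp
    | succ k ih =>
      intro hk1
      have hk : k ≤ q := Nat.le_of_succ_le hk1
      have hb := ih hk
      have hq1 : 1 ≤ q := by omega
      have hd : (0:ℝ) < (q:ℝ) + k + 1 := by positivity
      have hqk : (0:ℝ) < (q:ℝ) + k := by
        have : (1:ℝ) ≤ (q:ℝ) := by exact_mod_cast hq1
        positivity
      have hkq : (k:ℝ) ≤ (q:ℝ) := by exact_mod_cast hk
      -- key recurrence
      have key : ((2*q).choose (q - (k+1)) : ℝ) * ((q:ℝ) + k + 1) =
          ((2*q).choose (q - k) : ℝ) * ((q:ℝ) - k) := by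
        have h := Nat.choose_succ_right_eq (2*q) (q - (k+1))
        have e1 : q - (k+1) + 1 = q - k := by omega
        have e2 : 2*q - (q - (k+1)) = q + k + 1 := by omega
        rw [e1, e2] at h
        have h' := congrArg (Nat.cast : ℕ → ℝ) h
        push_cast [Nat.cast_sub hk] at h'
        linarith [h']
      have hrep : ((2*q).choose (q - (k+1)) : ℝ) =
          ((2*q).choose (q - k) : ℝ) * (((q:ℝ) - k) / ((q:ℝ) + k + 1)) := by
        field_simp
        linarith [key]
      have hfac : ((q:ℝ) - k) / ((q:ℝ) + k + 1) ≤
          Real.exp (-(2*(k:ℝ)+1) / ((q:ℝ) + k + 1)) := by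
        have heq : ((q:ℝ) - k) / ((q:ℝ) + k + 1) =
            (-(2*(k:ℝ)+1) / ((q:ℝ) + k + 1)) + 1 := by
          field_simp
          ring
        rw [heq]
        exact Real.add_one_le_exp _
      have hfacnn : (0:ℝ) ≤ ((q:ℝ) - k) / ((q:ℝ) + k + 1) := by
        apply div_nonneg <;> linarith
      calc ((2*q).choose (q - (k+1)) : ℝ) / ((2*q).choose q : ℝ)
          = (((2*q).choose (q - k) : ℝ) / ((2*q).choose q : ℝ)) *
            (((q:ℝ) - k) / ((q:ℝ) + k + 1)) := by rw [hrep]; ring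
        _ ≤ Real.exp (-((k:ℝ))^2 / ((q:ℝ) + k)) *
            Real.exp (-(2*(k:ℝ)+1) / ((q:ℝ) + k + 1)) := by
            apply mul_le_mul hb hfac hfacnn (le_of_lt (Real.exp_pos _))
        _ ≤ Real.exp (-(((k:ℕ)+1 : ℝ))^2 / ((q:ℝ) + ((k:ℝ)+1))) := by
            rw [← Real.exp_add]
            apply Real.exp_le_exp.mpr
            have h1 : ((k:ℝ))^2 / ((q:ℝ) + k + 1) ≤ ((k:ℝ))^2 / ((q:ℝ) + k) := by
              apply div_le_div_of_nonneg_left (by positivity) hqk (by linarith)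
            have e : -(((k:ℝ)+1))^2 / ((q:ℝ) + ((k:ℝ)+1)) =
                -((k:ℝ))^2 / ((q:ℝ) + k + 1) + (-(2*(k:ℝ)+1) / ((q:ℝ) + k + 1)) := by
              field_simp
              ring
            rw [e]
            have : -((k:ℝ))^2 / ((q:ℝ) + k) ≤ -((k:ℝ))^2 / ((q:ℝ) + k + 1) := by
              rw [neg_div, neg_div]
              linarith [h1]
            linarith
        _ = Real.exp (-(((k+1 : ℕ)) : ℝ)^2 / ((q:ℝ) + ((k+1 : ℕ) : ℝ))) := by
            push_cast
            ring_nf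
  exact main n h2
end

section
/- For every H with 0 < H < 1, the limit as n → ∞ of (1/n²)·∑_{q=n}^{∞} exp(−n²/q)·(q/n²)^(H−2) equals Γ(1−H), the Gamma function evaluated at 1−H. -/
/-!
With `φ u = exp (-u) * u ^ (2 - H)` the summand is `φ (n² / q)`, and the substitution
`u = n² / x` turns `∫ x in Ioi n, φ (n² / x)` into `n² * ∫ u in Ioo 0 n, φ u / u²`.
Comparing each term with the integral over the following unit interval costs at most the
total variation `∫ x in Ioi n, |d/dx φ (n² / x)| = ∫ u in Ioo 0 n, |φ' u|`, which is bounded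
uniformly in `n`; after division by `n²` the error vanishes, and
`∫ u in Ioi 0, φ u / u² = Γ (1 - H)`.
-/

open Filter MeasureTheory Set

theorem hasSum_intervalIntegral_add_nat {E : Type*} [NormedAddCommGroup E] [NormedSpace ℝ E]
    {F : ℝ → E} {a : ℝ} (hF : IntegrableOn F (Ioi a)) :
    HasSum (fun k : ℕ => ∫ x in a + k..a + k + 1, F x) (∫ x in Ioi a, F x) := by
  have hmono : Monotone fun k : ℕ => a + k := fun i j h => by simpa using h
  have hunbdd : ¬BddAbove (range fun k : ℕ => a + k) := by
    rintro ⟨b, hb⟩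
    obtain ⟨k, hk⟩ := exists_nat_gt (b - a)
    linarith [hb ⟨k, rfl⟩]
  have hunion := iUnion_Ioc_map_succ_eq_Ioi (fun k => hmono bot_le) hunbdd
  have hdisj := hmono.pairwise_disjoint_on_Ioc_succ
  simp only [Order.succ_eq_add_one, Nat.cast_add_one, ← add_assoc, Nat.bot_eq_zero,
    Nat.cast_zero, add_zero] at hunion hdisj
  rw [← hunion] at hF ⊢
  refine (hasSum_integral_iUnion (fun _ => measurableSet_Ioc) hdisj hF).congr_fun fun k => ?_
  exact intervalIntegral.integral_of_le (by linarith)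

/-- Integration by parts against `x - (b + 1)`. -/
theorem abs_sub_intervalIntegral_le {F F' : ℝ → ℝ} {b : ℝ}
    (hF : ∀ x ∈ Icc b (b + 1), HasDerivAt F (F' x) x)
    (hF' : IntervalIntegrable F' volume b (b + 1)) :
    |F b - ∫ x in b..b + 1, F x| ≤ ∫ x in b..b + 1, |F' x| := by
  have hb : b ≤ b + 1 := by linarith
  have hparts := intervalIntegral.integral_mul_deriv_eq_deriv_mul (u := F)
    (v := fun x => x - (b + 1)) (v' := fun _ => 1) (by rwa [uIcc_of_le hb])
    (fun x _ => (hasDerivAt_id x).sub_const _) hF' intervalIntegrable_const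
  simp only [mul_one, sub_self, mul_zero, zero_sub] at hparts
  calc |F b - ∫ x in b..b + 1, F x| = |∫ x in b..b + 1, F' x * (x - (b + 1))| := by
        rw [hparts]; ring_nf
    _ ≤ ∫ x in b..b + 1, |F' x * (x - (b + 1))| :=
        intervalIntegral.abs_integral_le_integral_abs hb
    _ ≤ ∫ x in b..b + 1, |F' x| := by
        refine intervalIntegral.integral_mono_on hb (hF'.mul_continuousOn (by fun_prop)).abs
          hF'.abs fun x hx => ?_
        rw [abs_mul]
        exact mul_le_of_le_one_right (abs_nonneg _)
          (abs_le.2 ⟨by linarith [hx.1], by linarith [hx.2]⟩)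

theorem abs_tsum_sub_integral_Ioi_le {F F' : ℝ → ℝ} {a : ℝ}
    (hF : ∀ x ∈ Ici a, HasDerivAt F (F' x) x) (hFi : IntegrableOn F (Ioi a))
    (hF'i : IntegrableOn F' (Ioi a)) :
    |∑' k : ℕ, F (a + k) - ∫ x in Ioi a, F x| ≤ ∫ x in Ioi a, |F' x| := by
  have hstep (k : ℕ) :
      ‖F (a + k) - ∫ x in a + k..a + k + 1, F x‖ ≤ ∫ x in a + k..a + k + 1, |F' x| := by
    have hak : a ≤ a + k := le_add_of_nonneg_right k.cast_nonneg
    refine abs_sub_intervalIntegral_le (fun x hx => hF x (hak.trans hx.1)) ?_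
    exact (intervalIntegrable_iff_integrableOn_Ioc_of_le (by linarith)).2
      (hF'i.mono_set fun x hx => hak.trans_lt hx.1)
  have hT := hasSum_intervalIntegral_add_nat hFi
  have hV := hasSum_intervalIntegral_add_nat hF'i.abs
  have hsummable : Summable fun k : ℕ => F (a + k) := by
    simpa using (Summable.of_norm_bounded hV.summable hstep).add hT.summable
  rw [← hT.tsum_eq, ← hsummable.tsum_sub hT.summable]
  exact tsum_of_norm_bounded hV hstep

section Inversion

variable {E : Type*} [NormedAddCommGroup E] [NormedSpace ℝ E] {c a : ℝ}

theorem image_const_div_Ioo_zero (hc : 0 < c) (ha : 0 < a) :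
    (fun u => c / u) '' Ioo 0 (c / a) = Ioi a := by
  ext x
  constructor
  · rintro ⟨u, ⟨hu0, hu⟩, rfl⟩
    exact (lt_div_iff₀ hu0).2 (by rwa [lt_div_iff₀ ha, mul_comm] at hu)
  · intro hx
    have hx0 : 0 < x := ha.trans hx
    exact ⟨c / x, ⟨by positivity, div_lt_div_of_pos_left hc ha hx⟩, by field_simp⟩

theorem hasDerivAt_const_div {u : ℝ} (hu : u ≠ 0) :
    HasDerivAt (fun u => c / u) (-(c / u ^ 2)) u := by
  simpa [div_eq_mul_inv, neg_div] using (hasDerivAt_inv hu).const_mul c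

theorem injOn_const_div (hc : c ≠ 0) : InjOn (fun u : ℝ => c / u) (Ioo 0 (c / a)) :=
  fun _ _ _ _ h => by simpa [div_eq_mul_inv, hc] using h

theorem integral_Ioi_eq_integral_Ioo_const_div (hc : 0 < c) (ha : 0 < a) (G : ℝ → E) :
    ∫ x in Ioi a, G x = ∫ u in Ioo 0 (c / a), (c / u ^ 2) • G (c / u) := by
  rw [← image_const_div_Ioo_zero hc ha, integral_image_eq_integral_abs_deriv_smul
    measurableSet_Ioo (fun u hu => (hasDerivAt_const_div hu.1.ne').hasDerivWithinAt)
    (injOn_const_div hc.ne')]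
  refine setIntegral_congr_fun measurableSet_Ioo fun u _ => ?_
  simp only [abs_neg, abs_of_nonneg (by positivity : 0 ≤ c / u ^ 2)]

theorem integrableOn_Ioi_iff_integrableOn_Ioo_const_div (hc : 0 < c) (ha : 0 < a) (G : ℝ → E) :
    IntegrableOn G (Ioi a) ↔
      IntegrableOn (fun u => (c / u ^ 2) • G (c / u)) (Ioo 0 (c / a)) := by
  rw [← image_const_div_Ioo_zero hc ha, integrableOn_image_iff_integrableOn_abs_deriv_smul
    measurableSet_Ioo (fun u hu => (hasDerivAt_const_div hu.1.ne').hasDerivWithinAt)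
    (injOn_const_div hc.ne')]
  refine integrableOn_congr_fun (fun u _ => ?_) measurableSet_Ioo
  simp only [abs_neg, abs_of_nonneg (by positivity : 0 ≤ c / u ^ 2)]

end Inversion

section RiemannSum

variable {φ φ' : ℝ → ℝ} {c a : ℝ}

theorem const_div_sq_mul_comp_const_div (hc : c ≠ 0) (u : ℝ) :
    c / u ^ 2 * φ (c / (c / u)) = c * (φ u / u ^ 2) := by
  rw [div_div_cancel₀ hc]; ring

theorem integrableOn_comp_const_div (hc : 0 < c) (ha : 0 < a)
    (hφi : IntegrableOn (fun u => φ u / u ^ 2) (Ioi 0)) :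
    IntegrableOn (fun x => φ (c / x)) (Ioi a) := by
  rw [integrableOn_Ioi_iff_integrableOn_Ioo_const_div hc ha]
  exact IntegrableOn.congr_fun ((hφi.mono_set Ioo_subset_Ioi_self).const_mul c)
    (fun u _ => (const_div_sq_mul_comp_const_div hc.ne' u).symm) measurableSet_Ioo

theorem integral_comp_const_div (hc : 0 < c) (ha : 0 < a) :
    ∫ x in Ioi a, φ (c / x) = c * ∫ u in Ioo 0 (c / a), φ u / u ^ 2 := by
  rw [integral_Ioi_eq_integral_Ioo_const_div hc ha, ← integral_const_mul]
  exact setIntegral_congr_fun measurableSet_Ioo fun u _ => const_div_sq_mul_comp_const_div hc.ne' u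

theorem hasDerivAt_comp_const_div (hφ : ∀ u > 0, HasDerivAt φ (φ' u) u) (hc : 0 < c) {x : ℝ}
    (hx : 0 < x) : HasDerivAt (fun x => φ (c / x)) (-(φ' (c / x) * (c / x ^ 2))) x := by
  simpa [Function.comp_def] using (hφ (c / x) (by positivity)).comp x (hasDerivAt_const_div hx.ne')

theorem const_div_sq_mul_deriv_comp_const_div (hc : c ≠ 0) {u : ℝ} (hu : u ≠ 0) :
    c / u ^ 2 * -(φ' (c / (c / u)) * (c / (c / u) ^ 2)) = -φ' u := by
  rw [div_div_cancel₀ hc]; field_simp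

theorem abs_tsum_comp_const_div_sub_le (hφ : ∀ u > 0, HasDerivAt φ (φ' u) u)
    (hφ' : IntegrableOn φ' (Ioi 0)) (hφi : IntegrableOn (fun u => φ u / u ^ 2) (Ioi 0))
    (hc : 0 < c) (ha : 0 < a) :
    |∑' k : ℕ, φ (c / (a + k)) - c * ∫ u in Ioo 0 (c / a), φ u / u ^ 2| ≤
      ∫ u in Ioi 0, |φ' u| := by
  set F' : ℝ → ℝ := fun x => -(φ' (c / x) * (c / x ^ 2))
  have hF'i : IntegrableOn F' (Ioi a) := by
    rw [integrableOn_Ioi_iff_integrableOn_Ioo_const_div hc ha]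
    exact IntegrableOn.congr_fun (hφ'.mono_set Ioo_subset_Ioi_self).neg
      (fun u hu => (const_div_sq_mul_deriv_comp_const_div hc.ne' hu.1.ne').symm)
      measurableSet_Ioo
  have hF'abs : ∫ x in Ioi a, |F' x| = ∫ u in Ioo 0 (c / a), |φ' u| := by
    rw [integral_Ioi_eq_integral_Ioo_const_div hc ha]
    refine setIntegral_congr_fun measurableSet_Ioo fun u hu => ?_
    rw [smul_eq_mul, ← abs_neg (φ' u), ← const_div_sq_mul_deriv_comp_const_div hc.ne' hu.1.ne',
      abs_mul, abs_of_pos (by have := hu.1; positivity : 0 < c / u ^ 2)]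
  calc _ = |∑' k : ℕ, φ (c / (a + k)) - ∫ x in Ioi a, φ (c / x)| := by
        rw [integral_comp_const_div hc ha]
    _ ≤ ∫ x in Ioi a, |F' x| :=
        abs_tsum_sub_integral_Ioi_le
          (fun x hx => hasDerivAt_comp_const_div hφ hc (ha.trans_le hx))
          (integrableOn_comp_const_div hc ha hφi) hF'i
    _ ≤ ∫ u in Ioi 0, |φ' u| := by
        rw [hF'abs]
        exact setIntegral_mono_set hφ'.abs (ae_of_all _ fun _ => abs_nonneg _)
          Ioo_subset_Ioi_self.eventuallyLE

theorem tendsto_inv_sq_mul_tsum_comp_sq_div (hφ : ∀ u > 0, HasDerivAt φ (φ' u) u)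
    (hφ' : IntegrableOn φ' (Ioi 0)) (hφi : IntegrableOn (fun u => φ u / u ^ 2) (Ioi 0)) :
    Tendsto (fun n : ℕ => 1 / (n : ℝ) ^ 2 * ∑' k : ℕ, φ ((n : ℝ) ^ 2 / (n + k))) atTop
      (nhds (∫ u in Ioi 0, φ u / u ^ 2)) := by
  have hpartial : Tendsto (fun n : ℕ => ∫ u in Ioo 0 (n : ℝ), φ u / u ^ 2) atTop
      (nhds (∫ u in Ioi 0, φ u / u ^ 2)) := by
    refine (intervalIntegral_tendsto_integral_Ioi 0 hφi tendsto_natCast_atTop_atTop).congr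
      fun n => ?_
    rw [intervalIntegral.integral_of_le n.cast_nonneg, integral_Ioc_eq_integral_Ioo]
  have herror : Tendsto (fun n : ℕ => (∫ u in Ioi 0, |φ' u|) / (n : ℝ) ^ 2) atTop (nhds 0) :=
    tendsto_const_nhds.div_atTop
      ((tendsto_pow_atTop two_ne_zero).comp tendsto_natCast_atTop_atTop)
  refine hpartial.congr_dist (squeeze_zero' (Eventually.of_forall fun _ => dist_nonneg) ?_ herror)
  filter_upwards [eventually_ge_atTop 1] with n hn
  have hn0 : (0 : ℝ) < n := by exact_mod_cast hn
  have hc : (0 : ℝ) < (n : ℝ) ^ 2 := by positivity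
  have hbound := abs_tsum_comp_const_div_sub_le hφ hφ' hφi hc hn0
  rw [sq, mul_div_cancel_right₀ _ hn0.ne', ← sq] at hbound
  rw [dist_comm, Real.dist_eq, le_div_iff₀ hc, ← abs_of_pos hc, ← abs_mul, abs_of_pos hc]
  calc _ = |∑' k : ℕ, φ ((n : ℝ) ^ 2 / (n + k)) -
        n ^ 2 * ∫ u in Ioo 0 (n : ℝ), φ u / u ^ 2| := by
        congr 1; field_simp
    _ ≤ _ := hbound

end RiemannSum

section GammaIntegrand

open Real

variable {s : ℝ}

theorem hasDerivAt_exp_neg_mul_rpow {u : ℝ} (hu : 0 < u) :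
    HasDerivAt (fun u => exp (-u) * u ^ s) (exp (-u) * (s * u ^ (s - 1) - u ^ s)) u :=
  ((hasDerivAt_neg u).exp.mul (hasDerivAt_rpow_const (Or.inl hu.ne'))).congr_deriv (by ring)

theorem integrableOn_exp_neg_mul_deriv_rpow (hs : 0 < s) :
    IntegrableOn (fun u => exp (-u) * (s * u ^ (s - 1) - u ^ s)) (Ioi 0) := by
  have h := ((GammaIntegral_convergent hs).const_mul s).sub
    (GammaIntegral_convergent (s := s + 1) (by linarith))
  refine IntegrableOn.congr_fun h (fun u _ => ?_) measurableSet_Ioi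
  simp only [Pi.sub_apply, add_sub_cancel_right]
  ring

theorem exp_neg_mul_rpow_div_sq {u : ℝ} (hu : 0 < u) :
    exp (-u) * u ^ s / u ^ 2 = exp (-u) * u ^ (s - 1 - 1) := by
  rw [mul_div_assoc, show s - 1 - 1 = s - 2 by ring, rpow_sub hu, rpow_two]

theorem integrableOn_exp_neg_mul_rpow_div_sq (hs : 1 < s) :
    IntegrableOn (fun u => exp (-u) * u ^ s / u ^ 2) (Ioi 0) :=
  (GammaIntegral_convergent (s := s - 1) (by linarith)).congr_fun
    (fun _ hu => (exp_neg_mul_rpow_div_sq hu).symm) measurableSet_Ioi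

theorem integral_exp_neg_mul_rpow_div_sq (hs : 1 < s) :
    ∫ u in Ioi 0, exp (-u) * u ^ s / u ^ 2 = Gamma (s - 1) := by
  rw [Gamma_eq_integral (by linarith)]
  exact setIntegral_congr_fun measurableSet_Ioi fun _ hu => exp_neg_mul_rpow_div_sq hu

end GammaIntegrand

theorem tsum_ite_le_eq_tsum_add {M : Type*} [AddCommMonoid M] [TopologicalSpace M] (f : ℕ → M)
    (n : ℕ) : ∑' q : ℕ, (if n ≤ q then f q else 0) = ∑' k : ℕ, f (n + k) := by
  rw [← (add_right_injective n).tsum_eq]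
  · simp
  · intro q hq
    have hnq : n ≤ q := by by_contra h; simp [h] at hq
    exact ⟨q - n, Nat.add_sub_cancel' hnq⟩

theorem stmt_4_general (H : ℝ) (h1 : H < 1) :
    Tendsto (fun n : ℕ => (1 / (n : ℝ)^2) *
        ∑' q : ℕ, if n ≤ q then Real.exp (-((n : ℝ))^2 / (q : ℝ)) * ((q : ℝ) / (n : ℝ)^2) ^ (H - 2) else 0)
      atTop (nhds (Real.Gamma (1 - H))) := by
  have hs : 1 < 2 - H := by linarith
  have hlim := tendsto_inv_sq_mul_tsum_comp_sq_div (fun _ => hasDerivAt_exp_neg_mul_rpow)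
    (integrableOn_exp_neg_mul_deriv_rpow (by linarith)) (integrableOn_exp_neg_mul_rpow_div_sq hs)
  rw [integral_exp_neg_mul_rpow_div_sq hs, show 2 - H - 1 = 1 - H by ring] at hlim
  refine hlim.congr fun n => ?_
  rw [tsum_ite_le_eq_tsum_add]
  congr 1
  refine tsum_congr fun k => ?_
  rw [Nat.cast_add, neg_div, ← inv_div (n + k : ℝ), Real.inv_rpow (by positivity),
    ← Real.rpow_neg (by positivity), neg_sub]

/-- For `0 < H < 1`,
`(1/n²)·∑_{q=n}^{∞} exp(−n²/q)·(q/n²)^(H−2) → Γ(1−H)` as `n → ∞`. -/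
theorem stmt_4 (H : ℝ) (h0 : 0 < H) (h1 : H < 1) :
    Tendsto (fun n : ℕ => (1 / (n : ℝ)^2) *
        ∑' q : ℕ, if n ≤ q then Real.exp (-((n : ℝ))^2 / (q : ℝ)) * ((q : ℝ) / (n : ℝ)^2) ^ (H - 2) else 0)
      atTop (nhds (Real.Gamma (1 - H))) :=
  stmt_4_general H h1
end

section
/- For every H with 0 < H < 1, the limit as n → ∞ of n^(2−2H)·∑_{q=n}^{∞} q^(H−2)·C(2q, q−n)/C(2q, q) equals Γ(1−H). -/
/-!
The ratio `C(2q, q-n) / C(2q, q)` is the product `∏_{j<n} (q-j)/(q+j+1)`, and `1 + y ≤ eʸ`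
applied to each factor squeezes it between `exp(-n²/(q-n))` and `exp(-n²/(q+n))`. The substitution
`q = n + ⌊t n²⌋` turns `n^(2-2H) ∑_{q ≥ n} q^(H-2) ⋯` into the integral over `t > 0` of a step
function that converges pointwise to `t^(H-2) e^(-1/t)` and is dominated by `min(C, t^(H-2))`.
Dominated convergence gives the limit `∫₀^∞ t^(H-2) e^(-1/t) dt`, which is `Γ(1-H)` after `t ↦ 1/t`.
-/

open Filter MeasureTheory Set Real Topology

namespace CentralBinomTail

lemma tendsto_natCast_div_sq : Tendsto (fun n : ℕ => (n : ℝ) / n ^ 2) atTop (𝓝 0) := by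
  simpa only [sq, div_self_mul_self'] using tendsto_inv_atTop_nhds_zero_nat (𝕜 := ℝ)

lemma exists_rpow_mul_exp_neg_half_le {p : ℝ} (hp : 0 ≤ p) :
    ∃ C, ∀ s, 0 ≤ s → s ^ p * exp (-(s / 2)) ≤ C := by
  set k := ⌈p⌉₊
  refine ⟨max 1 (2 ^ k * k.factorial), fun s hs => ?_⟩
  rcases le_total s 1 with hs1 | hs1
  · calc s ^ p * exp (-(s / 2)) ≤ 1 * 1 := by
          gcongr
          · exact rpow_le_one hs hs1 hp
          · exact exp_le_one_iff.2 (by linarith)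
      _ ≤ _ := by rw [one_mul]; exact le_max_left _ _
  · have hfac := pow_div_factorial_le_exp (s / 2) (by linarith) k
    calc s ^ p * exp (-(s / 2)) ≤ s ^ k * exp (-(s / 2)) := by
          gcongr
          rw [← rpow_natCast]
          exact rpow_le_rpow_of_exponent_le hs1 (Nat.le_ceil p)
      _ ≤ 2 ^ k * k.factorial := by
          rw [exp_neg, ← div_eq_mul_inv, div_le_iff₀ (exp_pos _)]
          rw [div_pow, div_div, div_le_iff₀ (by positivity)] at hfac
          linarith
      _ ≤ _ := le_max_right _ _

lemma integrableOn_Ioi_ite_const_rpow (C : ℝ) {p : ℝ} (hp : p < -1) :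
    IntegrableOn (fun t => if t ≤ 1 then C else t ^ p) (Ioi 0) := by
  rw [← Ioc_union_Ioi_eq_Ioi zero_le_one]
  refine IntegrableOn.union ?_ ?_
  · refine (integrableOn_const measure_Ioc_lt_top.ne).congr_fun (fun t ht => ?_) measurableSet_Ioc
    rw [if_pos ht.2]
  · refine (integrableOn_Ioi_rpow_of_lt hp one_pos).congr_fun (fun t ht => ?_) measurableSet_Ioi
    rw [if_neg (not_le.2 ht)]

lemma integral_rpow_mul_exp_neg_inv {s : ℝ} (hs : 0 < s) :
    ∫ t in Ioi 0, t ^ (-s - 1) * exp (-t⁻¹) = Gamma s := by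
  rw [Gamma_eq_integral hs, ← integral_comp_rpow_Ioi (fun x => exp (-x) * x ^ (s - 1))
    (neg_ne_zero.2 one_ne_zero)]
  refine setIntegral_congr_fun measurableSet_Ioi fun t (ht : 0 < t) => ?_
  simp only [smul_eq_mul, abs_neg, abs_one, one_mul, rpow_neg_one]
  rw [inv_rpow ht.le, ← rpow_neg ht.le, mul_comm (exp _), ← mul_assoc, ← rpow_add ht]
  ring_nf

section NatFloor

variable {E : Type*} [NormedAddCommGroup E] [NormedSpace ℝ E] [CompleteSpace E]

lemma setIntegral_Ico_comp_natFloor (g : ℕ → E) (m : ℕ) :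
    ∫ s in Ico (m : ℝ) (m + 1), g ⌊(s : ℝ)⌋₊ = g m := by
  rw [setIntegral_congr_fun measurableSet_Ico fun s hs => by rw [Nat.floor_eq_on_Ico m s hs],
    setIntegral_const]
  simp

lemma integral_Ioi_comp_natFloor {g : ℕ → E} (hg : Summable fun m => ‖g m‖) :
    ∫ s in Ioi (0 : ℝ), g ⌊s⌋₊ = ∑' m, g m := by
  have hunion : ⋃ m : ℕ, Ico (m : ℝ) (m + 1) = Ici 0 := by
    ext s
    simp only [mem_iUnion, mem_Ico, mem_Ici]
    exact ⟨fun ⟨m, hm, _⟩ => m.cast_nonneg.trans hm,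
      fun hs => ⟨⌊s⌋₊, Nat.floor_le hs, Nat.lt_floor_add_one s⟩⟩
  have hdisj : Pairwise (Function.onFun Disjoint fun m : ℕ => Ico (m : ℝ) (m + 1)) := fun i j hij =>
    disjoint_left.2 fun s hi hj =>
      hij ((Nat.floor_eq_on_Ico i s hi).symm.trans (Nat.floor_eq_on_Ico j s hj))
  have hint : IntegrableOn (fun s : ℝ => g ⌊s⌋₊) (⋃ m : ℕ, Ico (m : ℝ) (m + 1)) := by
    refine integrableOn_iUnion_of_summable_integral_norm (fun m => ?_) ?_
    · exact (integrableOn_const (C := g m) measure_Ico_lt_top.ne).congr_fun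
        (fun s hs => by rw [Nat.floor_eq_on_Ico m s hs]) measurableSet_Ico
    · simpa only [setIntegral_Ico_comp_natFloor (fun m => ‖g m‖)] using hg
  have := hasSum_integral_iUnion (fun m => measurableSet_Ico) hdisj hint
  rw [hunion, integral_Ici_eq_integral_Ioi] at this
  simp only [setIntegral_Ico_comp_natFloor] at this
  exact this.tsum_eq.symm

lemma integral_Ioi_comp_natFloor_mul {g : ℕ → E} (hg : Summable fun m => ‖g m‖) {c : ℝ}
    (hc : 0 < c) : ∫ t in Ioi (0 : ℝ), g ⌊t * c⌋₊ = c⁻¹ • ∑' m, g m := by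
  rw [integral_comp_mul_right_Ioi (fun s => g ⌊s⌋₊) 0 hc, zero_mul, integral_Ioi_comp_natFloor hg]

end NatFloor

lemma choose_sub_div_choose {m k n : ℕ} (hnk : n ≤ k) (hkm : k ≤ m) :
    (m.choose (k - n) : ℝ) / m.choose k =
      ∏ j ∈ Finset.range n, ((k : ℝ) - j) / ((m : ℝ) - k + j + 1) := by
  induction n with
  | zero =>
    have : (m.choose k : ℝ) ≠ 0 := by exact_mod_cast (Nat.choose_pos hkm).ne'
    simp [this]
  | succ n ih =>
    have hsucc : m.choose (k - (n + 1) + 1) * (k - (n + 1) + 1) =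
        m.choose (k - (n + 1)) * (m - (k - (n + 1))) := Nat.choose_succ_right_eq _ _
    rw [show k - (n + 1) + 1 = k - n by omega] at hsucc
    have hsuccR : (m.choose (k - n) : ℝ) * ((k : ℝ) - n) =
        m.choose (k - (n + 1)) * ((m : ℝ) - k + n + 1) := by
      have := congrArg (Nat.cast (R := ℝ)) hsucc
      push_cast [Nat.cast_sub (show n ≤ k by omega), Nat.cast_sub (show k - (n + 1) ≤ m by omega),
        Nat.cast_sub (show n + 1 ≤ k from hnk)] at this
      linear_combination this
    have hpos : (0 : ℝ) < (m : ℝ) - k + n + 1 := by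
      have : (k : ℝ) ≤ m := by exact_mod_cast hkm
      linarith
    have hchoose : (m.choose k : ℝ) ≠ 0 := by exact_mod_cast (Nat.choose_pos hkm).ne'
    rw [Finset.prod_range_succ, ← ih (by omega)]
    field_simp
    linear_combination -hsuccR

noncomputable def binomRatio (n : ℕ) (x : ℝ) : ℝ :=
  ∏ j ∈ Finset.range n, (x - j) / (x + j + 1)

lemma choose_sub_div_centralBinom {n q : ℕ} (h : n ≤ q) :
    ((2 * q).choose (q - n) : ℝ) / (2 * q).choose q = binomRatio n q := by
  rw [choose_sub_div_choose h (by omega), binomRatio]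
  refine Finset.prod_congr rfl fun j _ => ?_
  push_cast
  ring_nf

lemma exp_neg_sq_div_eq_prod (n : ℕ) (y : ℝ) :
    exp (-(n ^ 2 / y)) = ∏ j ∈ Finset.range n, exp (-((2 * j + 1) / y)) := by
  have hodd : ∑ j ∈ Finset.range n, (2 * (j : ℝ) + 1) = n ^ 2 := by
    induction n with
    | zero => simp
    | succ n ih => rw [Finset.sum_range_succ, ih]; push_cast; ring
  rw [← exp_sum, Finset.sum_neg_distrib, ← Finset.sum_div, hodd]

lemma binomRatio_nonneg {n : ℕ} {x : ℝ} (hx : (n : ℝ) ≤ x + 1) : 0 ≤ binomRatio n x := by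
  refine Finset.prod_nonneg fun j hj => div_nonneg ?_ ?_
  all_goals
    have : (j : ℝ) + 1 ≤ n := by exact_mod_cast Finset.mem_range.1 hj
    have : (0 : ℝ) ≤ j := j.cast_nonneg
    linarith

lemma binomRatio_le_exp {n : ℕ} {x : ℝ} (hx : (n : ℝ) ≤ x + 1) :
    binomRatio n x ≤ exp (-(n ^ 2 / (x + n))) := by
  rw [exp_neg_sq_div_eq_prod]
  refine Finset.prod_le_prod (fun j hj => ?_) fun j hj => ?_
  all_goals
    have hjn : (j : ℝ) + 1 ≤ n := by exact_mod_cast Finset.mem_range.1 hj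
    have : (0 : ℝ) ≤ j := j.cast_nonneg
    have hpos : 0 < x + j + 1 := by linarith
  · exact div_nonneg (by linarith) hpos.le
  · calc (x - j) / (x + j + 1) = 1 + -((2 * j + 1) / (x + j + 1)) := by field_simp; ring
      _ ≤ exp (-((2 * j + 1) / (x + j + 1))) := add_one_le_exp _ |>.trans_eq' (add_comm _ _)
      _ ≤ exp (-((2 * j + 1) / (x + n))) := by
        gcongr exp (-?_)
        exact div_le_div_of_nonneg_left (by positivity) hpos (by linarith)

lemma exp_le_binomRatio {n : ℕ} {x : ℝ} (hx : (n : ℝ) < x) :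
    exp (-(n ^ 2 / (x - n))) ≤ binomRatio n x := by
  rw [exp_neg_sq_div_eq_prod]
  refine Finset.prod_le_prod (fun j _ => (exp_pos _).le) fun j hj => ?_
  have hjn : (j : ℝ) + 1 ≤ n := by exact_mod_cast Finset.mem_range.1 hj
  have : (0 : ℝ) ≤ j := j.cast_nonneg
  have hpos : 0 < x - j := by linarith
  calc exp (-((2 * j + 1) / (x - n))) ≤ exp (-((2 * j + 1) / (x - j))) := by
        gcongr exp (-?_)
        exact div_le_div_of_nonneg_left (by positivity) (by linarith) (by linarith)
    _ = (exp ((2 * j + 1) / (x - j)))⁻¹ := exp_neg _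
    _ ≤ (1 + (2 * j + 1) / (x - j))⁻¹ :=
        inv_anti₀ (by positivity) (add_one_le_exp _ |>.trans_eq' (add_comm _ _))
    _ = (x - j) / (x + j + 1) := by
        have : 0 < x + j + 1 := by linarith
        field_simp
        ring

lemma binomRatio_le_one {n : ℕ} {x : ℝ} (hx : (n : ℝ) ≤ x + 1) : binomRatio n x ≤ 1 := by
  refine (binomRatio_le_exp hx).trans (exp_le_one_iff.2 (neg_nonpos.2 ?_))
  rcases n.eq_zero_or_pos with rfl | hn
  · simp
  · have : (1 : ℝ) ≤ n := by exact_mod_cast hn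
    exact div_nonneg (sq_nonneg _) (by linarith)

lemma tendsto_binomRatio {q : ℕ → ℝ} {t : ℝ} (ht : 0 < t)
    (hq : Tendsto (fun n => q n / n ^ 2) atTop (𝓝 t)) :
    Tendsto (fun n => binomRatio n (q n)) atTop (𝓝 (exp (-t⁻¹))) := by
  have hplus : Tendsto (fun n => (q n + n) / n ^ 2) atTop (𝓝 t) := by
    simpa only [add_div, add_zero] using hq.add tendsto_natCast_div_sq
  have hminus : Tendsto (fun n => (q n - n) / n ^ 2) atTop (𝓝 t) := by
    simpa only [sub_div, sub_zero] using hq.sub tendsto_natCast_div_sq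
  have hlarge : ∀ᶠ n : ℕ in atTop, (n : ℝ) < q n := by
    filter_upwards [hminus.eventually (lt_mem_nhds ht)] with n hn
    by_contra! h
    exact hn.not_ge (div_nonpos_of_nonpos_of_nonneg (by linarith) (by positivity))
  have hexp : ∀ {f : ℕ → ℝ}, Tendsto (fun n => f n / n ^ 2) atTop (𝓝 t) →
      Tendsto (fun n => exp (-(n ^ 2 / f n))) atTop (𝓝 (exp (-t⁻¹))) := fun hf =>
    ((hf.inv₀ ht.ne').neg.rexp).congr fun n => by rw [inv_div]
  refine tendsto_of_tendsto_of_tendsto_of_le_of_le' (hexp hminus) (hexp hplus) ?_ ?_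
  · filter_upwards [hlarge] with n hn using exp_le_binomRatio hn
  · filter_upwards [hlarge] with n hn using binomRatio_le_exp (by linarith)

noncomputable def gridIndex (n : ℕ) (t : ℝ) : ℕ := n + ⌊t * n ^ 2⌋₊

lemma le_gridIndex (n : ℕ) (t : ℝ) : (n : ℝ) ≤ gridIndex n t := by
  exact_mod_cast Nat.le_add_right _ _

lemma le_gridIndex_div_sq {n : ℕ} {t : ℝ} (hn : 1 ≤ n) : t ≤ gridIndex n t / n ^ 2 := by
  have hn' : (1 : ℝ) ≤ n := by exact_mod_cast hn
  rw [le_div_iff₀ (by positivity), gridIndex, Nat.cast_add]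
  linarith [Nat.lt_floor_add_one (t * n ^ 2)]

lemma tendsto_gridIndex_div_sq {t : ℝ} (ht : 0 ≤ t) :
    Tendsto (fun n => (gridIndex n t : ℝ) / n ^ 2) atTop (𝓝 t) := by
  have hfloor : Tendsto (fun n : ℕ => (⌊t * n ^ 2⌋₊ : ℝ) / n ^ 2) atTop (𝓝 t) :=
    (tendsto_nat_floor_mul_div_atTop ht).comp
      ((tendsto_pow_atTop two_ne_zero).comp tendsto_natCast_atTop_atTop)
  simpa only [gridIndex, Nat.cast_add, add_div, zero_add] using tendsto_natCast_div_sq.add hfloor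

noncomputable def tailIntegrand (H : ℝ) (n : ℕ) (t : ℝ) : ℝ :=
  ((gridIndex n t : ℝ) / n ^ 2) ^ (H - 2) * binomRatio n (gridIndex n t)

lemma tailIntegrand_nonneg (H : ℝ) (n : ℕ) (t : ℝ) : 0 ≤ tailIntegrand H n t :=
  mul_nonneg (rpow_nonneg (by positivity) _)
    (binomRatio_nonneg (by linarith [le_gridIndex n t]))

lemma tailIntegrand_le_rpow {H : ℝ} (hH : H < 1) {n : ℕ} (hn : 1 ≤ n) {t : ℝ} (ht : 0 < t) :
    tailIntegrand H n t ≤ t ^ (H - 2) := by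
  have hq : (n : ℝ) ≤ gridIndex n t + 1 := by linarith [le_gridIndex n t]
  calc tailIntegrand H n t ≤ t ^ (H - 2) * 1 :=
        mul_le_mul (rpow_le_rpow_of_nonpos ht (le_gridIndex_div_sq hn) (by linarith))
          (binomRatio_le_one hq) (binomRatio_nonneg hq) (rpow_nonneg ht.le _)
    _ = t ^ (H - 2) := mul_one _

lemma tailIntegrand_le_const {H C : ℝ} (hC : ∀ s, 0 ≤ s → s ^ (2 - H) * exp (-(s / 2)) ≤ C)
    {n : ℕ} (hn : 1 ≤ n) (t : ℝ) : tailIntegrand H n t ≤ C := by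
  set q : ℝ := (gridIndex n t : ℝ)
  have hnq : (n : ℝ) ≤ q := le_gridIndex n t
  have hn' : (1 : ℝ) ≤ n := by exact_mod_cast hn
  have hq : 0 < q := by linarith
  have hR : binomRatio n q ≤ exp (-((q / n ^ 2)⁻¹ / 2)) := by
    refine (binomRatio_le_exp (by linarith)).trans (exp_le_exp.2 (neg_le_neg ?_))
    rw [inv_div, div_div]
    exact div_le_div_of_nonneg_left (by positivity) (by positivity) (by linarith)
  calc tailIntegrand H n t ≤ (q / n ^ 2) ^ (H - 2) * exp (-((q / n ^ 2)⁻¹ / 2)) :=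
        mul_le_mul_of_nonneg_left hR (rpow_nonneg (by positivity) _)
    _ = (q / n ^ 2)⁻¹ ^ (2 - H) * exp (-((q / n ^ 2)⁻¹ / 2)) := by
        rw [inv_rpow (by positivity), ← rpow_neg (by positivity), neg_sub]
    _ ≤ C := hC _ (by positivity)

lemma tendsto_tailIntegrand (H : ℝ) {t : ℝ} (ht : 0 < t) :
    Tendsto (fun n => tailIntegrand H n t) atTop (𝓝 (t ^ (H - 2) * exp (-t⁻¹))) :=
  ((tendsto_gridIndex_div_sq ht.le).rpow_const (Or.inl ht.ne')).mul
    (tendsto_binomRatio ht (tendsto_gridIndex_div_sq ht.le))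

lemma tail_sum_eq_integral {H : ℝ} (hH : H < 1) {n : ℕ} (hn : 1 ≤ n) :
    (n : ℝ) ^ (2 - 2 * H) * ∑' q : ℕ, (if n ≤ q then
        (q : ℝ) ^ (H - 2) * ((2 * q).choose (q - n) : ℝ) / ((2 * q).choose q : ℝ) else 0) =
      ∫ t in Ioi 0, tailIntegrand H n t := by
  set g : ℕ → ℝ := fun m => ((n + m : ℕ) : ℝ) ^ (H - 2) * binomRatio n (n + m : ℕ)
  have hreindex : (∑' q : ℕ, if n ≤ q then
      (q : ℝ) ^ (H - 2) * ((2 * q).choose (q - n) : ℝ) / ((2 * q).choose q : ℝ) else 0) =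
      ∑' m, g m := by
    rw [← (add_right_injective n).tsum_eq fun q hq => ?_]
    · refine tsum_congr fun m => ?_
      rw [if_pos (Nat.le_add_right n m), mul_div_assoc,
        choose_sub_div_centralBinom (Nat.le_add_right n m)]
    · by_contra hrange
      exact hq (if_neg fun h => hrange ⟨q - n, by simp only; omega⟩)
  have hg : Summable fun m => ‖g m‖ := by
    refine Summable.of_nonneg_of_le (fun m => norm_nonneg _) (fun m => ?_)
      ((summable_nat_rpow.2 (by linarith : H - 2 < -1)).comp_injective (add_right_injective n))
    have hm : (n : ℝ) ≤ (n + m : ℕ) + 1 := by push_cast; linarith [m.cast_nonneg (α := ℝ)]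
    rw [norm_of_nonneg (mul_nonneg (rpow_nonneg (Nat.cast_nonneg _) _) (binomRatio_nonneg hm))]
    exact mul_le_of_le_one_right (rpow_nonneg (Nat.cast_nonneg _) _) (binomRatio_le_one hm)
  have hn2 : (0 : ℝ) < n ^ 2 := by positivity
  have hscale : ∀ y : ℝ, 0 ≤ y → (n : ℝ) ^ (2 - 2 * H) * n ^ 2 * y ^ (H - 2) =
      (y / n ^ 2) ^ (H - 2) := fun y hy => by
    rw [div_eq_mul_inv, mul_rpow hy (by positivity), inv_rpow hn2.le, ← rpow_neg hn2.le,
      ← rpow_natCast, ← rpow_mul (by positivity), ← rpow_add (by positivity)]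
    ring_nf
  rw [hreindex]
  calc (n : ℝ) ^ (2 - 2 * H) * ∑' m, g m
      = (n : ℝ) ^ (2 - 2 * H) * (n ^ 2 * ∫ t in Ioi (0 : ℝ), g ⌊t * n ^ 2⌋₊) := by
        rw [integral_Ioi_comp_natFloor_mul hg hn2, smul_eq_mul, mul_inv_cancel_left₀ hn2.ne']
    _ = ∫ t in Ioi (0 : ℝ), (n : ℝ) ^ (2 - 2 * H) * n ^ 2 * g ⌊t * n ^ 2⌋₊ := by
        rw [← mul_assoc, integral_const_mul]
    _ = ∫ t in Ioi 0, tailIntegrand H n t := by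
        refine setIntegral_congr_fun measurableSet_Ioi fun t _ => ?_
        rw [tailIntegrand, ← hscale _ (Nat.cast_nonneg _)]
        simp only [g, gridIndex, mul_assoc]

lemma measurable_tailIntegrand (H : ℝ) (n : ℕ) : Measurable (tailIntegrand H n) :=
  (measurable_from_nat (f := fun k : ℕ =>
      (((n + k : ℕ) : ℝ) / n ^ 2) ^ (H - 2) * binomRatio n (n + k : ℕ))).comp
    (measurable_id.mul_const _).nat_floor

lemma tendsto_integral_tailIntegrand {H : ℝ} (hH : H < 1) :
    Tendsto (fun n => ∫ t in Ioi 0, tailIntegrand H n t) atTop (𝓝 (Gamma (1 - H))) := by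
  obtain ⟨C, hC⟩ := exists_rpow_mul_exp_neg_half_le (by linarith : 0 ≤ 2 - H)
  rw [← integral_rpow_mul_exp_neg_inv (by linarith : 0 < 1 - H), show -(1 - H) - 1 = H - 2 by ring]
  refine tendsto_integral_filter_of_dominated_convergence
    (fun t => if t ≤ 1 then C else t ^ (H - 2))
    (Eventually.of_forall fun n => (measurable_tailIntegrand H n).aestronglyMeasurable) ?_
    (integrableOn_Ioi_ite_const_rpow C (by linarith))
    ((ae_restrict_iff' measurableSet_Ioi).2 (ae_of_all _ fun t ht => tendsto_tailIntegrand H ht))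
  filter_upwards [eventually_ge_atTop 1] with n hn
  refine (ae_restrict_iff' measurableSet_Ioi).2 (ae_of_all _ fun t (ht : 0 < t) => ?_)
  rw [norm_of_nonneg (tailIntegrand_nonneg H n t)]
  split_ifs
  · exact tailIntegrand_le_const hC hn t
  · exact tailIntegrand_le_rpow hH hn ht

end CentralBinomTail

open CentralBinomTail in
theorem stmt_5_general (H : ℝ) (h1 : H < 1) :
    Tendsto (fun n : ℕ => (n : ℝ) ^ (2 - 2*H) *
        ∑' q : ℕ, if n ≤ q then
          (q : ℝ) ^ (H - 2) * ((2*q).choose (q - n) : ℝ) / ((2*q).choose q : ℝ) else 0)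
      atTop (nhds (Real.Gamma (1 - H))) := by
  refine (tendsto_integral_tailIntegrand h1).congr' ?_
  filter_upwards [eventually_ge_atTop 1] with n hn
  exact (tail_sum_eq_integral h1 hn).symm

/-- For `0 < H < 1`,
`n^(2−2H)·∑_{q=n}^{∞} q^(H−2)·C(2q, q−n)/C(2q, q) → Γ(1−H)` as `n → ∞`. -/
theorem stmt_5 (H : ℝ) (h0 : 0 < H) (h1 : H < 1) :
    Tendsto (fun n : ℕ => (n : ℝ) ^ (2 - 2*H) *
        ∑' q : ℕ, if n ≤ q then
          (q : ℝ) ^ (H - 2) * ((2*q).choose (q - n) : ℝ) / ((2*q).choose q : ℝ) else 0)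
      atTop (nhds (Real.Gamma (1 - H))) :=
  stmt_5_general H h1
end

section
/- Let (Ω, 𝓕, P) be a probability space, Q ∈ ℕ, and let (ξ_{i,q})_{i∈ℤ, 0≤q≤Q} be real-valued square-integrable random variables that are pairwise uncorrelated, each with mean 0 and variance 1. Let m : {0,…,Q} → ℝ and define for each k ∈ ℤ the random variable X_k := ∑_{q=0}^{Q} m_q · ∑_{j=0}^{q} C(q,j)·ξ_{k+j, q}. Then for all k ∈ ℤ and all natural numbers n, E[X_k · X_{k+n}] = ∑_{q=n}^{Q} m_q² · C(2q, q−n); in particular the covariance vanishes unless some q ≥ n. -/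
/-!
Expand both increments in the orthonormal noise. Distinct layers `q ≠ q'` are uncorrelated, and
within layer `q` the term `ξ_{k+j,q}` of `X_k` meets the term `ξ_{k+n+j',q}` of `X_{k+n}` exactly
when `j = n + j'`. Hence `E[X_k X_{k+n}] = ∑_q m_q² ∑_{j'} C(q, n+j') C(q, j')`, and Vandermonde's
identity evaluates the inner sum to `C(2q, n+q)`, which is `C(2q, q-n)` for `n ≤ q` and `0` otherwise.
-/

open MeasureTheory Finset

theorem Nat.sum_range_choose_add_mul_choose (a b n : ℕ) :
    ∑ j ∈ range (b + 1), a.choose (n + j) * b.choose j = (a + b).choose (n + b) := by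
  rw [Nat.add_choose_eq, Nat.sum_antidiagonal_eq_sum_range_succ_mk, Nat.succ_eq_add_one,
    add_assoc n b 1, sum_range_add _ n, add_eq_right.mpr (sum_eq_zero fun i hi => ?_)]
  · refine sum_congr rfl fun j hj => ?_
    rw [Nat.add_sub_add_left, Nat.choose_symm (mem_range_succ_iff.mp hj)]
  · rw [mem_range] at hi
    rw [Nat.choose_eq_zero_of_lt (n := b) (by omega), mul_zero]

theorem sum_range_mul_choose_two_mul_add {R : Type*} [Semiring R] (f : ℕ → R) (Q n : ℕ) :
    ∑ q ∈ range (Q + 1), f q * ((2 * q).choose (n + q) : R) =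
      ∑ q ∈ Icc n Q, f q * ((2 * q).choose (q - n) : R) := by
  symm
  refine sum_subset_zero_on_sdiff (fun q hq => ?_) (fun q hq => ?_) (fun q hq => ?_)
  · simp only [mem_Icc] at hq; simp only [mem_range]; omega
  · simp only [mem_sdiff, mem_range, mem_Icc] at hq
    rw [Nat.choose_eq_zero_of_lt (by omega), Nat.cast_zero, mul_zero]
  · simp only [mem_Icc] at hq
    rw [← Nat.choose_symm (by omega)]
    congr 3; omega

section

variable {Ω α β : Type*} [MeasurableSpace Ω] {μ : Measure Ω}

theorem integral_sum_mul_sum {s : Finset α} {t : Finset β} {f : α → Ω → ℝ} {g : β → Ω → ℝ}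
    (hf : ∀ a ∈ s, MemLp (f a) 2 μ) (hg : ∀ b ∈ t, MemLp (g b) 2 μ) (c : α → ℝ) (d : β → ℝ) :
    ∫ ω, (∑ a ∈ s, c a * f a ω) * (∑ b ∈ t, d b * g b ω) ∂μ =
      ∑ a ∈ s, ∑ b ∈ t, c a * d b * ∫ ω, f a ω * g b ω ∂μ := by
  have hint : ∀ a ∈ s, ∀ b ∈ t, Integrable (fun ω => c a * d b * (f a ω * g b ω)) μ :=
    fun a ha b hb => ((hf a ha).integrable_mul (hg b hb)).const_mul _
  calc ∫ ω, (∑ a ∈ s, c a * f a ω) * (∑ b ∈ t, d b * g b ω) ∂μ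
      = ∫ ω, ∑ a ∈ s, ∑ b ∈ t, c a * d b * (f a ω * g b ω) ∂μ := by
        congr 1 with ω
        rw [sum_mul_sum]
        exact sum_congr rfl fun a _ => sum_congr rfl fun b _ => by ring
    _ = ∑ a ∈ s, ∑ b ∈ t, c a * d b * ∫ ω, f a ω * g b ω ∂μ := by
        rw [integral_finsetSum _ fun a ha => integrable_finsetSum _ (hint a ha)]
        refine sum_congr rfl fun a ha => ?_
        rw [integral_finsetSum _ (hint a ha)]
        simp only [integral_const_mul]

variable {Q : ℕ} {ξ : ℤ → ℕ → Ω → ℝ}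

theorem integral_layer_mul_layer (hL2 : ∀ (i : ℤ) (q : ℕ), q ≤ Q → MemLp (ξ i q) 2 μ)
    (horth : ∀ (i i' : ℤ) (q q' : ℕ), q ≤ Q → q' ≤ Q →
      ∫ ω, ξ i q ω * ξ i' q' ω ∂μ = if (i, q) = (i', q') then 1 else 0)
    (k : ℤ) (n : ℕ) {q q' : ℕ} (hq : q ≤ Q) (hq' : q' ≤ Q) :
    ∫ ω, (∑ j ∈ range (q + 1), (q.choose j : ℝ) * ξ (k + j) q ω) *
        (∑ j ∈ range (q' + 1), (q'.choose j : ℝ) * ξ (k + n + j) q' ω) ∂μ =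
      if q = q' then ((2 * q).choose (n + q) : ℝ) else 0 := by
  rw [integral_sum_mul_sum (fun j _ => hL2 _ _ hq) (fun j _ => hL2 _ _ hq')]
  simp only [horth _ _ _ _ hq hq', Prod.mk.injEq, mul_ite, mul_one, mul_zero]
  split_ifs with hqq
  · subst hqq
    have hcollapse : ∀ j ∈ range (q + 1), (∑ i ∈ range (q + 1),
        if i = n + j then (q.choose i : ℝ) * q.choose j else 0) = q.choose (n + j) * q.choose j := by
      intro j _
      rw [sum_ite_eq']
      split_ifs with hj
      · rfl
      · rw [mem_range, not_lt] at hj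
        rw [Nat.choose_eq_zero_of_lt (by omega), Nat.cast_zero, zero_mul]
    simp only [add_assoc, add_right_inj, and_true, ← Nat.cast_add, Nat.cast_inj]
    rw [sum_comm, sum_congr rfl hcollapse, two_mul, ← Nat.sum_range_choose_add_mul_choose]
    push_cast; rfl
  · simp [hqq]

end

theorem stmt_6_general {Ω : Type*} [MeasurableSpace Ω] (P : Measure Ω)
    (Q : ℕ) (ξ : ℤ → ℕ → Ω → ℝ)
    (hL2 : ∀ (i : ℤ) (q : ℕ), q ≤ Q → MemLp (ξ i q) 2 P)
    (hvar : ∀ (i : ℤ) (q : ℕ), q ≤ Q → ∫ ω, (ξ i q ω)^2 ∂P = 1)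
    (huncorr : ∀ (i i' : ℤ) (q q' : ℕ), q ≤ Q → q' ≤ Q → (i, q) ≠ (i', q') →
      ∫ ω, ξ i q ω * ξ i' q' ω ∂P = 0)
    (m : ℕ → ℝ) (X : ℤ → Ω → ℝ)
    (hX : ∀ (k : ℤ) (ω : Ω), X k ω =
      ∑ q ∈ Finset.range (Q+1), m q * ∑ j ∈ Finset.range (q+1),
        (q.choose j : ℝ) * ξ (k + (j : ℤ)) q ω) :
    ∀ (k : ℤ) (n : ℕ),
      ∫ ω, X k ω * X (k + (n : ℤ)) ω ∂P =
        ∑ q ∈ Finset.Icc n Q, (m q)^2 * ((2*q).choose (q - n) : ℝ) := by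
  intro k n
  have horth : ∀ (i i' : ℤ) (q q' : ℕ), q ≤ Q → q' ≤ Q →
      ∫ ω, ξ i q ω * ξ i' q' ω ∂P = if (i, q) = (i', q') then 1 else 0 := by
    intro i i' q q' hq hq'
    split_ifs with h
    · simp only [Prod.mk.injEq] at h
      obtain ⟨rfl, rfl⟩ := h
      simpa only [sq] using hvar i q hq
    · exact huncorr i i' q q' hq hq' h
  have hlayerL2 : ∀ (k : ℤ) (q : ℕ), q ≤ Q →
      MemLp (fun ω => ∑ j ∈ range (q + 1), (q.choose j : ℝ) * ξ (k + j) q ω) 2 P :=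
    fun k q hq => memLp_finsetSum _ fun j _ => (hL2 _ q hq).const_mul _
  simp only [hX]
  rw [integral_sum_mul_sum (fun q hq => hlayerL2 k q (mem_range_succ_iff.mp hq))
    (fun q hq => hlayerL2 (k + n) q (mem_range_succ_iff.mp hq)),
    ← sum_range_mul_choose_two_mul_add]
  refine sum_congr rfl fun q hq => ?_
  have hqQ := mem_range_succ_iff.mp hq
  rw [sum_congr rfl fun q' hq' => by
    rw [integral_layer_mul_layer hL2 horth k n hqQ (mem_range_succ_iff.mp hq')]]
  simp only [mul_ite, mul_zero, sum_ite_eq, hq, if_true, sq]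

/-- Covariance of the light-cone network increments: if `ξ_{i,q}` (for `i ∈ ℤ`, `0 ≤ q ≤ Q`)
are square-integrable, pairwise uncorrelated, with mean `0` and variance `1`, and
`X_k := ∑_{q=0}^{Q} m_q ∑_{j=0}^{q} C(q,j)·ξ_{k+j,q}`, then
`E[X_k X_{k+n}] = ∑_{q=n}^{Q} m_q²·C(2q, q−n)`. -/
theorem stmt_6 {Ω : Type*} [MeasurableSpace Ω] (P : Measure Ω) [IsProbabilityMeasure P]
    (Q : ℕ) (ξ : ℤ → ℕ → Ω → ℝ)
    (hL2 : ∀ (i : ℤ) (q : ℕ), q ≤ Q → MemLp (ξ i q) 2 P)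
    (hmean : ∀ (i : ℤ) (q : ℕ), q ≤ Q → ∫ ω, ξ i q ω ∂P = 0)
    (hvar : ∀ (i : ℤ) (q : ℕ), q ≤ Q → ∫ ω, (ξ i q ω)^2 ∂P = 1)
    (huncorr : ∀ (i i' : ℤ) (q q' : ℕ), q ≤ Q → q' ≤ Q → (i, q) ≠ (i', q') →
      ∫ ω, ξ i q ω * ξ i' q' ω ∂P = 0)
    (m : ℕ → ℝ) (X : ℤ → Ω → ℝ)
    (hX : ∀ (k : ℤ) (ω : Ω), X k ω =
      ∑ q ∈ Finset.range (Q+1), m q * ∑ j ∈ Finset.range (q+1),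
        (q.choose j : ℝ) * ξ (k + (j : ℤ)) q ω) :
    ∀ (k : ℤ) (n : ℕ),
      ∫ ω, X k ω * X (k + (n : ℤ)) ω ∂P =
        ∑ q ∈ Finset.Icc n Q, (m q)^2 * ((2*q).choose (q - n) : ℝ) :=
  stmt_6_general P Q ξ hL2 hvar huncorr m X hX
end

section
/- Let (Ω, 𝓕, P) be a probability space, Z : Ω → ℝ a measurable random variable, σ > 0, m ∈ ℝ, and ξ : Ω → ℝ a random variable with law gaussianReal 0 σ² that is independent of Z. Set Y := m·Z + ξ. Then the conditional distribution of Y given Z is almost everywhere the Gaussian measure with mean m·z and variance σ²; that is, condDistrib Y Z P agrees (for Law(Z)-almost every z) with the kernel z ↦ gaussianReal (m·z) σ². -/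
/-!
Since `ξ` is independent of `Z`, the joint law of `(Z, ξ)` is the product `Law(Z) ⊗ Law(ξ)`.
Pushing it forward along the shear `(z, x) ↦ (z, m z + x)` gives the joint law of `(Z, Y)`, and
disintegrating the product fibrewise shows that this is `Law(Z) ⊗ₘ κ` with
`κ z = Law(ξ).map (m z + ·) = gaussianReal (m z) σ²`. By uniqueness of disintegrations,
`condDistrib Y Z P` agrees with `κ` for `Law(Z)`-almost every `z`.
-/

open MeasureTheory ProbabilityTheory

namespace ProbabilityTheory.Kernel

variable {α G : Type*} [MeasurableSpace α] [MeasurableSpace G] [Add G] [MeasurableAdd₂ G]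

noncomputable def translateBy (f : α → G) (hf : Measurable f) (ν : Measure G) : Kernel α G :=
  (deterministic f hf ×ₖ const α ν).map (fun p : G × G ↦ p.1 + p.2)

lemma translateBy_apply (f : α → G) (hf : Measurable f) (ν : Measure G) [SFinite ν] (z : α) :
    translateBy f hf ν z = ν.map (f z + ·) := by
  rw [translateBy, map_apply _ (by fun_prop), prod_apply, deterministic_apply, const_apply,
    Measure.dirac_prod, Measure.map_map (by fun_prop) (by fun_prop)]
  rfl

instance (f : α → G) (hf : Measurable f) (ν : Measure G) [SFinite ν] :
    IsSFiniteKernel (translateBy f hf ν) := by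
  unfold translateBy
  infer_instance

instance (f : α → G) (hf : Measurable f) (ν : Measure G) [IsFiniteMeasure ν] :
    IsFiniteKernel (translateBy f hf ν) := by
  unfold translateBy
  infer_instance

end ProbabilityTheory.Kernel

section

variable {α G : Type*} [MeasurableSpace α] [MeasurableSpace G] [Add G] [MeasurableAdd₂ G]

lemma MeasureTheory.Measure.map_prod_shear_eq_compProd_translateBy
    (μ : Measure α) [SFinite μ] (ν : Measure G) [SFinite ν] {f : α → G} (hf : Measurable f) :
    (μ.prod ν).map (fun p ↦ (p.1, f p.1 + p.2)) = μ ⊗ₘ Kernel.translateBy f hf ν := by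
  ext s hs
  rw [Measure.map_apply (by fun_prop) hs, Measure.prod_apply ((by fun_prop : Measurable
      fun p : α × G ↦ (p.1, f p.1 + p.2)) hs), Measure.compProd_apply hs]
  refine lintegral_congr fun z ↦ ?_
  rw [Kernel.translateBy_apply, Measure.map_apply (by fun_prop) (measurable_prodMk_left hs)]
  rfl

variable [StandardBorelSpace G] [Nonempty G]

theorem ProbabilityTheory.condDistrib_add_ae_eq_translateBy {Ω : Type*} [MeasurableSpace Ω]
    {P : Measure Ω} [IsFiniteMeasure P] {Z : Ω → α} {ξ : Ω → G} {f : α → G}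
    (hZ : Measurable Z) (hξ : Measurable ξ) (hf : Measurable f) (hindep : IndepFun Z ξ P) :
    condDistrib (fun ω ↦ f (Z ω) + ξ ω) Z P =ᵐ[P.map Z] Kernel.translateBy f hf (P.map ξ) := by
  refine condDistrib_ae_eq_of_measure_eq_compProd_of_measurable hZ (by fun_prop) ?_
  have hjoint : P.map (fun ω ↦ (Z ω, ξ ω)) = (P.map Z).prod (P.map ξ) :=
    (indepFun_iff_map_prod_eq_prod_map_map hZ.aemeasurable hξ.aemeasurable).mp hindep
  rw [← Measure.map_prod_shear_eq_compProd_translateBy _ _ hf, ← hjoint,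
    Measure.map_map (by fun_prop) (by fun_prop)]
  rfl

end

theorem stmt_9_general {Ω : Type*} [MeasurableSpace Ω] (P : Measure Ω) [IsProbabilityMeasure P]
    (Z : Ω → ℝ) (hZ : Measurable Z) (σ : NNReal) (m : ℝ)
    (ξ : Ω → ℝ) (hξm : Measurable ξ)
    (hξ : Measure.map ξ P = gaussianReal 0 (σ^2))
    (hindep : IndepFun ξ Z P)
    (Y : Ω → ℝ) (hY : ∀ ω, Y ω = m * Z ω + ξ ω) :
    ∀ᵐ z ∂(Measure.map Z P), condDistrib Y Z P z = gaussianReal (m * z) (σ^2) := by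
  obtain rfl : Y = fun ω ↦ m * Z ω + ξ ω := funext hY
  filter_upwards [condDistrib_add_ae_eq_translateBy hZ hξm (measurable_const_mul m) hindep.symm]
    with z hz
  rw [hz, Kernel.translateBy_apply, hξ, gaussianReal_map_const_add, zero_add]

/-- If `ξ` has law `gaussianReal 0 σ²`, is independent of `Z`, and `Y = m·Z + ξ`, then the
conditional distribution of `Y` given `Z` is a.e. the kernel `z ↦ gaussianReal (m·z) σ²`. -/
theorem stmt_9 {Ω : Type*} [MeasurableSpace Ω] (P : Measure Ω) [IsProbabilityMeasure P]
    (Z : Ω → ℝ) (hZ : Measurable Z) (σ : NNReal) (hσ : 0 < σ) (m : ℝ)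
    (ξ : Ω → ℝ) (hξm : Measurable ξ)
    (hξ : Measure.map ξ P = gaussianReal 0 (σ^2))
    (hindep : IndepFun ξ Z P)
    (Y : Ω → ℝ) (hY : ∀ ω, Y ω = m * Z ω + ξ ω) :
    ∀ᵐ z ∂(Measure.map Z P), condDistrib Y Z P z = gaussianReal (m * z) (σ^2) :=
  stmt_9_general P Z hZ σ m ξ hξm hξ hindep Y hY
end

section
/- For every H with 0 < H ≤ 1, the fractional Brownian motion covariance kernel K_H(s,t) := (1/2)(s^(2H) + t^(2H) − |s−t|^(2H)) is positive semidefinite on [0,∞): for every n ∈ ℕ, every t : Fin n → ℝ with t_i ≥ 0 for all i, and every c : Fin n → ℝ, one has ∑_{i,j} c_i · c_j · K_H(t_i, t_j) ≥ 0. -/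
/-!
Adjoining the point `0` with weight `-∑ cᵢ` turns the quadratic form of `K_H` into
`-(1/2) ∑ c'ᵢ c'ⱼ |xᵢ - xⱼ|^(2H)` with `∑ c'ᵢ = 0`, so it suffices that `|x|^(2H)` is conditionally
negative definite. For `H = 1` this is `-2 (∑ cᵢ xᵢ)² ≤ 0`. For `H < 1`, scaling gives
`(x²)^H ∫₀^∞ (1 - e^(-u)) u^(-1-H) du = ∫₀^∞ (1 - e^(-x² u)) u^(-1-H) du`, which reduces the
claim to positive semidefiniteness of the Gaussian kernels `e^(-u (x - y)²)`, read off from the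
power series of `e^(2uxy)`.
-/

open Real MeasureTheory Set Finset
open scoped Nat

theorem comp_mul_left_mul_rpow_eq {g : ℝ → ℝ} {s a u : ℝ} (ha : 0 < a) (hu : 0 < u) :
    g (a * u) * u ^ s = a ^ (-s) * (g (a * u) * (a * u) ^ s) := by
  rw [mul_rpow ha.le hu.le, rpow_neg ha.le]
  field_simp

theorem integral_comp_mul_left_mul_rpow (g : ℝ → ℝ) (s : ℝ) {a : ℝ} (ha : 0 < a) :
    ∫ u in Ioi 0, g (a * u) * u ^ s = a ^ (-1 - s) * ∫ u in Ioi 0, g u * u ^ s := by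
  have hscale := integral_comp_mul_left_Ioi (fun v => g v * v ^ s) 0 ha
  rw [mul_zero, smul_eq_mul] at hscale
  rw [setIntegral_congr_fun measurableSet_Ioi fun u hu => comp_mul_left_mul_rpow_eq ha hu,
    integral_const_mul, hscale, ← mul_assoc, ← rpow_neg_one, ← rpow_add ha]
  ring_nf

theorem IntegrableOn.comp_mul_left_mul_rpow {g : ℝ → ℝ} {s a : ℝ} (ha : 0 < a)
    (hg : IntegrableOn (fun u => g u * u ^ s) (Ioi 0)) :
    IntegrableOn (fun u => g (a * u) * u ^ s) (Ioi 0) := by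
  have hscale := (integrableOn_Ioi_comp_mul_left_iff (fun v => g v * v ^ s) 0 ha).mpr
  rw [mul_zero] at hscale
  exact IntegrableOn.congr_fun ((hscale hg).const_mul (a ^ (-s)))
    (fun u hu => (comp_mul_left_mul_rpow_eq ha hu).symm) measurableSet_Ioi

theorem integrableOn_one_sub_exp_neg_mul_rpow {H : ℝ} (hH0 : 0 < H) (hH1 : H < 1) :
    IntegrableOn (fun u => (1 - exp (-u)) * u ^ (-1 - H)) (Ioi 0) := by
  have hcont : ContinuousOn (fun u => (1 - exp (-u)) * u ^ (-1 - H)) (Ioi 0) :=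
    (continuous_const.sub (continuous_exp.comp continuous_neg)).continuousOn.mul
      fun u hu => (continuousAt_rpow_const u _ (Or.inl hu.ne')).continuousWithinAt
  have hnonneg : ∀ u ∈ Ioi (0 : ℝ), 0 ≤ 1 - exp (-u) := fun u hu =>
    sub_nonneg.mpr (exp_le_one_iff.mpr (neg_nonpos.mpr (le_of_lt hu)))
  have hnear : IntegrableOn (fun u => (1 - exp (-u)) * u ^ (-1 - H)) (Ioc 0 1) := by
    have hdom : IntegrableOn (fun u : ℝ => u ^ (-H)) (Ioc 0 1) := by
      rw [integrableOn_Ioc_iff_integrableOn_Ioo]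
      exact (intervalIntegral.integrableOn_Ioo_rpow_iff zero_lt_one).mpr (by linarith)
    refine Integrable.mono' hdom
      ((hcont.mono Ioc_subset_Ioi_self).aestronglyMeasurable measurableSet_Ioc) ?_
    refine (ae_restrict_iff' measurableSet_Ioc).mpr (ae_of_all _ fun u hu => ?_)
    have hu0 : 0 < u := hu.1
    rw [norm_of_nonneg (mul_nonneg (hnonneg u hu0) (rpow_nonneg hu0.le _))]
    calc (1 - exp (-u)) * u ^ (-1 - H) ≤ u * u ^ (-1 - H) := by
          gcongr
          linarith [add_one_le_exp (-u)]
      _ = u ^ (-H) := by rw [← rpow_one_add' hu0.le (by linarith)]; ring_nf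
  have hfar : IntegrableOn (fun u => (1 - exp (-u)) * u ^ (-1 - H)) (Ioi 1) := by
    have hdom : IntegrableOn (fun u : ℝ => u ^ (-1 - H)) (Ioi 1) :=
      integrableOn_Ioi_rpow_of_lt (by linarith) zero_lt_one
    refine Integrable.mono' hdom
      ((hcont.mono (Ioi_subset_Ioi zero_le_one)).aestronglyMeasurable measurableSet_Ioi) ?_
    refine (ae_restrict_iff' measurableSet_Ioi).mpr (ae_of_all _ fun u hu => ?_)
    have hu0 : (0 : ℝ) < u := zero_lt_one.trans hu
    rw [norm_of_nonneg (mul_nonneg (hnonneg u hu0) (rpow_nonneg hu0.le _))]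
    exact mul_le_of_le_one_left (rpow_nonneg hu0.le _) (by linarith [exp_pos (-u)])
  simpa only [Ioc_union_Ioi_eq_Ioi zero_le_one] using hnear.union hfar

theorem integral_one_sub_exp_neg_mul_rpow_pos {H : ℝ} (hH0 : 0 < H) (hH1 : H < 1) :
    0 < ∫ u in Ioi 0, (1 - exp (-u)) * u ^ (-1 - H) := by
  have hpos : ∀ u ∈ Ioi (0 : ℝ), 0 < (1 - exp (-u)) * u ^ (-1 - H) := fun u hu =>
    mul_pos (sub_pos.mpr (Real.exp_lt_one_iff.mpr (neg_lt_zero.mpr hu))) (rpow_pos_of_pos hu _)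
  rw [setIntegral_pos_iff_support_of_nonneg_ae
    ((ae_restrict_iff' measurableSet_Ioi).mpr (ae_of_all _ fun u hu => (hpos u hu).le))
    (integrableOn_one_sub_exp_neg_mul_rpow hH0 hH1)]
  refine (by simp : (0 : ENNReal) < volume (Ioi (0 : ℝ))).trans_le (measure_mono ?_)
  exact fun u hu => ⟨(hpos u hu).ne', hu⟩

theorem integral_one_sub_exp_neg_mul_mul_rpow {H a : ℝ} (hH0 : 0 < H) (ha : 0 ≤ a) :
    ∫ u in Ioi 0, (1 - exp (-(a * u))) * u ^ (-1 - H)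
      = a ^ H * ∫ u in Ioi 0, (1 - exp (-u)) * u ^ (-1 - H) := by
  rcases ha.eq_or_lt with rfl | ha
  · simp [zero_rpow hH0.ne']
  · rw [integral_comp_mul_left_mul_rpow (fun v => 1 - exp (-v)) _ ha]
    ring_nf

theorem integrableOn_one_sub_exp_neg_mul_mul_rpow {H a : ℝ} (hH0 : 0 < H) (hH1 : H < 1)
    (ha : 0 ≤ a) :
    IntegrableOn (fun u => (1 - exp (-(a * u))) * u ^ (-1 - H)) (Ioi 0) := by
  rcases ha.eq_or_lt with rfl | ha
  · simp
  · exact IntegrableOn.comp_mul_left_mul_rpow (g := fun v => 1 - exp (-v)) ha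
      (integrableOn_one_sub_exp_neg_mul_rpow hH0 hH1)

section

variable {ι : Type*} [Fintype ι]

theorem sum_sum_mul_exp_neg_sub_sq_mul_nonneg {l : ℝ} (hl : 0 ≤ l) (x c : ι → ℝ) :
    0 ≤ ∑ i, ∑ j, c i * c j * exp (-((x i - x j) ^ 2 * l)) := by
  obtain ⟨e, he⟩ : ∃ e : ι → ℝ, ∀ i, e i = c i * exp (-(x i ^ 2 * l)) := ⟨_, fun _ => rfl⟩
  have hterm : ∀ i j, HasSum (fun k : ℕ => (2 * l) ^ k / k ! * (e i * x i ^ k) * (e j * x j ^ k))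
      (c i * c j * exp (-((x i - x j) ^ 2 * l))) := by
    intro i j
    have hexp : HasSum (fun k : ℕ => (2 * l * x i * x j) ^ k / k !)
        (exp (2 * l * x i * x j)) := by
      rw [exp_eq_exp_ℝ]
      exact NormedSpace.expSeries_div_hasSum_exp _
    have hmul : HasSum (fun k : ℕ => e i * e j * ((2 * l * x i * x j) ^ k / k !))
        (e i * e j * exp (2 * l * x i * x j)) := hexp.mul_left _
    convert hmul using 1
    · ext k
      ring
    · rw [he, he, show -((x i - x j) ^ 2 * l) = -(x i ^ 2 * l) + -(x j ^ 2 * l) + 2 * l * x i * x j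
        by ring, exp_add, exp_add]
      ring
  refine (hasSum_sum fun i _ => hasSum_sum fun j _ => hterm i j).nonneg fun k => ?_
  have hsq : ∑ i, ∑ j, (2 * l) ^ k / k ! * (e i * x i ^ k) * (e j * x j ^ k)
      = (2 * l) ^ k / k ! * (∑ i, e i * x i ^ k) ^ 2 := by
    rw [sq, Finset.sum_mul_sum, Finset.mul_sum]
    simp_rw [Finset.mul_sum, mul_assoc]
  rw [hsq]
  positivity

theorem sum_sum_mul_one_sub_exp_neg_sub_sq_mul_nonpos {l : ℝ} (hl : 0 ≤ l) (x c : ι → ℝ)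
    (hc : ∑ i, c i = 0) :
    ∑ i, ∑ j, c i * c j * (1 - exp (-((x i - x j) ^ 2 * l))) ≤ 0 := by
  simp only [mul_sub, mul_one, Finset.sum_sub_distrib, ← Finset.sum_mul_sum, hc, zero_mul,
    zero_sub, neg_nonpos]
  exact sum_sum_mul_exp_neg_sub_sq_mul_nonneg hl x c

theorem sum_sum_mul_sub_sq_eq_neg_two_mul_sq (x c : ι → ℝ) (hc : ∑ i, c i = 0) :
    ∑ i, ∑ j, c i * c j * (x i - x j) ^ 2 = -2 * (∑ i, c i * x i) ^ 2 := by
  calc ∑ i, ∑ j, c i * c j * (x i - x j) ^ 2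
      = ∑ i, ∑ j, (c i * x i ^ 2 * c j + c i * (c j * x j ^ 2)
          - 2 * (c i * x i) * (c j * x j)) :=
        Finset.sum_congr rfl fun i _ => Finset.sum_congr rfl fun j _ => by ring
    _ = -2 * (∑ i, c i * x i) ^ 2 := by
        simp only [Finset.sum_add_distrib, Finset.sum_sub_distrib, ← Finset.mul_sum,
          ← Finset.sum_mul, hc]
        ring

theorem sum_sum_mul_abs_sub_rpow_nonpos {H : ℝ} (hH0 : 0 < H)
    (hH1 : H ≤ 1) (x c : ι → ℝ) (hc : ∑ i, c i = 0) :
    ∑ i, ∑ j, c i * c j * |x i - x j| ^ (2 * H) ≤ 0 := by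
  have hsq : ∀ d : ℝ, |d| ^ (2 * H) = (d ^ 2) ^ H := fun d => by
    rw [rpow_mul (abs_nonneg d), rpow_two, sq_abs]
  simp_rw [hsq]
  rcases hH1.eq_or_lt with rfl | hH1
  · simp_rw [rpow_one, sum_sum_mul_sub_sq_eq_neg_two_mul_sq x c hc]
    linarith [sq_nonneg (∑ i, c i * x i)]
  set I := ∫ u in Ioi 0, (1 - exp (-u)) * u ^ (-1 - H) with hI
  have hint : ∀ i j, IntegrableOn
      (fun u => c i * c j * ((1 - exp (-((x i - x j) ^ 2 * u))) * u ^ (-1 - H))) (Ioi 0) :=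
    fun i j => (integrableOn_one_sub_exp_neg_mul_mul_rpow hH0 hH1 (sq_nonneg _)).const_mul _
  suffices (∑ i, ∑ j, c i * c j * ((x i - x j) ^ 2) ^ H) * I ≤ 0 from
    nonpos_of_mul_nonpos_left this (integral_one_sub_exp_neg_mul_rpow_pos hH0 hH1)
  calc (∑ i, ∑ j, c i * c j * ((x i - x j) ^ 2) ^ H) * I
      = ∫ u in Ioi 0, ∑ i, ∑ j,
          c i * c j * ((1 - exp (-((x i - x j) ^ 2 * u))) * u ^ (-1 - H)) := by
        rw [integral_finsetSum _ fun i _ => integrable_finsetSum _ fun j _ => hint i j]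
        simp_rw [integral_finsetSum _ fun j _ => hint _ j, integral_const_mul,
          integral_one_sub_exp_neg_mul_mul_rpow hH0 (sq_nonneg _), ← hI, Finset.sum_mul, mul_assoc]
    _ ≤ 0 := by
        refine setIntegral_nonpos measurableSet_Ioi fun u hu => ?_
        simp_rw [← mul_assoc, ← Finset.sum_mul]
        exact mul_nonpos_of_nonpos_of_nonneg
          (sum_sum_mul_one_sub_exp_neg_sub_sq_mul_nonpos (le_of_lt hu) x c hc)
          (rpow_nonneg (le_of_lt hu) _)

theorem sum_sum_mul_half_add_sub_eq_neg_half_sum_option (f : ℝ → ℝ)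
    (hf0 : f 0 = 0) (hf : ∀ y, f (-y) = f y) (x c : ι → ℝ) :
    ∑ i, ∑ j, c i * c j * ((1 / 2) * (f (x i) + f (x j) - f (x i - x j)))
      = -(1 / 2) * ∑ i : Option ι, ∑ j : Option ι,
          i.elim (-∑ k, c k) c * j.elim (-∑ k, c k) c * f (i.elim 0 x - j.elim 0 x) := by
  simp only [Fintype.sum_option, Option.elim, zero_sub, sub_zero, hf, hf0, mul_zero, zero_add]
  calc ∑ i, ∑ j, c i * c j * ((1 / 2) * (f (x i) + f (x j) - f (x i - x j)))
      = ∑ i, ∑ j, (1 / 2 * (c i * f (x i) * c j) + 1 / 2 * (c i * (c j * f (x j)))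
          - 1 / 2 * (c i * c j * f (x i - x j))) :=
        Finset.sum_congr rfl fun i _ => Finset.sum_congr rfl fun j _ => by ring
    _ = 1 / 2 * ((∑ i, c i * f (x i)) * ∑ j, c j) + 1 / 2 * ((∑ i, c i) * ∑ j, c j * f (x j))
          - 1 / 2 * ∑ i, ∑ j, c i * c j * f (x i - x j) := by
        simp only [Finset.sum_add_distrib, Finset.sum_sub_distrib, ← Finset.mul_sum,
          ← Finset.sum_mul]
    _ = _ := by
        simp only [neg_mul, mul_neg, Finset.sum_add_distrib, Finset.sum_neg_distrib, mul_assoc,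
          mul_left_comm (c _) (∑ j, c j), ← Finset.mul_sum]
        ring

end

/-- The fractional Brownian motion covariance kernel
`K_H(s,t) = (1/2)(s^(2H) + t^(2H) − |s−t|^(2H))` is positive semidefinite on `[0,∞)`
for `0 < H ≤ 1`. -/
theorem stmt_12 (H : ℝ) (h0 : 0 < H) (h1 : H ≤ 1) (n : ℕ) (t : Fin n → ℝ)
    (ht : ∀ i, 0 ≤ t i) (c : Fin n → ℝ) :
    0 ≤ ∑ i, ∑ j, c i * c j *
      ((1/2) * ((t i) ^ (2*H) + (t j) ^ (2*H) - |t i - t j| ^ (2*H))) := by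
  have habs : ∀ i, t i ^ (2 * H) = |t i| ^ (2 * H) := fun i => by rw [abs_of_nonneg (ht i)]
  simp_rw [habs]
  rw [sum_sum_mul_half_add_sub_eq_neg_half_sum_option (fun y => |y| ^ (2 * H))
    (by simp [zero_rpow (by positivity : 2 * H ≠ 0)]) (fun y => by rw [abs_neg])]
  have hcnd := sum_sum_mul_abs_sub_rpow_nonpos h0 h1 (fun i : Option (Fin n) => i.elim 0 t)
    (fun i => i.elim (-∑ k, c k) c) (by simp [Fintype.sum_option])
  linarith
end

section
/- For every H ∈ (0,1) with H ≠ 1/2 there exists a constant C_H > 0 such that for all reals 0 < s ≤ t: (i) the function u ↦ ((t−u)^(H−1/2) − (−u)^(H−1/2))·((s−u)^(H−1/2) − (−u)^(H−1/2)) is Lebesgue integrable on (−∞, 0) and the function u ↦ (t−u)^(H−1/2)·(s−u)^(H−1/2) is integrable on (0, s); and (ii) ∫_{−∞}^{0} ((t−u)^(H−1/2) − (−u)^(H−1/2))((s−u)^(H−1/2) − (−u)^(H−1/2)) du + ∫_{0}^{s} (t−u)^(H−1/2)(s−u)^(H−1/2) du = C_H · (1/2)(t^(2H) + s^(2H) −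 (t−s)^(2H)). -/
open MeasureTheory

namespace MVNaux

open Set

/-- The Mandelbrot–Van Ness kernel. -/
noncomputable def F (a t u : ℝ) : ℝ := max (t - u) 0 ^ a - max (-u) 0 ^ a

lemma measF (a t : ℝ) : Measurable (F a t) := by
  unfold F; fun_prop

lemma F_vanish {a s : ℝ} (hs : 0 < s) {u : ℝ} (hu : s ≤ u) : F a s u = 0 := by
  unfold F
  rw [max_eq_right (by linarith), max_eq_right (by linarith)]
  exact sub_self _

lemma F_zero (a u : ℝ) : F a 0 u = 0 := by
  simp [F, zero_sub]

lemma F_sub (a s t u : ℝ) : F a t u - F a s u = F a (t - s) (u - s) := by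
  unfold F
  have h1 : t - s - (u - s) = t - u := by ring
  have h2 : -(u - s) = s - u := by ring
  rw [h1, h2]
  ring

lemma F_scale {a t : ℝ} (ht : 0 < t) (v : ℝ) : F a t (t * v) = t ^ a * F a 1 v := by
  unfold F
  have h1 : t - t * v = t * (1 - v) := by ring
  have h2 : -(t * v) = t * (-v) := by ring
  have h0 : (0 : ℝ) = t * 0 := by ring
  rw [h1, h2, h0, ← mul_max_of_nonneg _ _ ht.le, ← mul_max_of_nonneg _ _ ht.le,
    Real.mul_rpow ht.le (le_max_right _ _), Real.mul_rpow ht.le (le_max_right _ _)]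
  ring

lemma diff_bound {a : ℝ} (ha : a < 1) {v t : ℝ} (hv : 0 < v) (ht : 0 ≤ t) :
    |(v + t) ^ a - v ^ a| ≤ |a| * v ^ (a - 1) * t := by
  have key := norm_image_sub_le_of_norm_deriv_le_segment'
    (f := fun x : ℝ => x ^ a) (f' := fun x : ℝ => a * x ^ (a - 1)) (a := v) (b := v + t)
    (C := |a| * v ^ (a - 1))
    (fun x hx => (Real.hasDerivAt_rpow_const
      (Or.inl (ne_of_gt (lt_of_lt_of_le hv hx.1)))).hasDerivWithinAt)
    (fun x hx => by
      have hx0 : 0 < x := lt_of_lt_of_le hv hx.1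
      rw [Real.norm_eq_abs, abs_mul, abs_of_nonneg (Real.rpow_nonneg hx0.le _)]
      exact mul_le_mul_of_nonneg_left
        (Real.rpow_le_rpow_of_nonpos hv hx.1 (by linarith)) (abs_nonneg a))
    (v + t) ⟨by linarith, le_refl _⟩
  rw [Real.norm_eq_abs, add_sub_cancel_left] at key
  exact key


lemma integrableOn_comp_neg {f : ℝ → ℝ} {s : Set ℝ} (hs : MeasurableSet s)
    (h : IntegrableOn f s) : IntegrableOn (fun x => f (-x)) (Neg.neg ⁻¹' s) := by
  have h2 := ((integrable_indicator_iff hs).2 h).comp_neg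
  have h3 : (fun x : ℝ => s.indicator f (-x)) =
      (Neg.neg ⁻¹' s).indicator (fun x => f (-x)) := by
    ext x
    by_cases hx : -x ∈ s <;> simp [Set.indicator, hx, Set.mem_preimage]
  rw [h3] at h2
  exact (integrable_indicator_iff (hs.preimage measurable_neg)).1 h2

lemma sq_bound_far {a t u : ℝ} (ha : a < 1) (ht : 0 < t) (hu : u < 0) :
    (F a t u) ^ 2 ≤ (|a| * t) ^ 2 * (-u) ^ (2 * a - 2) := by
  have hv : 0 < -u := by linarith
  have hF : F a t u = ((-u) + t) ^ a - (-u) ^ a := by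
    unfold F
    rw [max_eq_left (by linarith), max_eq_left hv.le]
    ring_nf
  have hb := diff_bound ha hv ht.le
  rw [← hF] at hb
  have h1 : (F a t u) ^ 2 ≤ (|a| * (-u) ^ (a - 1) * t) ^ 2 := by
    rw [← sq_abs (F a t u)]
    exact pow_le_pow_left₀ (abs_nonneg _) hb 2
  refine h1.trans_eq ?_
  have h2 : ((-u) ^ (a - 1)) ^ 2 = (-u) ^ (2 * a - 2) := by
    rw [sq, ← Real.rpow_add hv]
    ring_nf
  calc (|a| * (-u) ^ (a - 1) * t) ^ 2 = (|a| * t) ^ 2 * ((-u) ^ (a - 1)) ^ 2 := by ring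
  _ = (|a| * t) ^ 2 * (-u) ^ (2 * a - 2) := by rw [h2]

lemma rpow_sq {x : ℝ} (hx : 0 ≤ x) {a : ℝ} (ha : a ≠ 0) : (x ^ a) ^ 2 = x ^ (2 * a) := by
  rcases eq_or_lt_of_le hx with h | h
  · rw [← h, Real.zero_rpow ha, Real.zero_rpow (mul_ne_zero two_ne_zero ha)]
    norm_num
  · rw [sq, ← Real.rpow_add h]
    ring_nf

lemma sq_integrable {a : ℝ} (ha1 : -(1/2) < a) (ha2 : a < 1/2) (ha0 : a ≠ 0)
    {t : ℝ} (ht : 0 < t) : Integrable (fun u => (F a t u) ^ 2) := by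
  have hmeas : AEStronglyMeasurable (fun u => (F a t u) ^ 2) volume :=
    ((measF a t).pow_const 2).aestronglyMeasurable
  -- Part 1 : on Iic (-1)
  have part1 : IntegrableOn (fun u => (F a t u) ^ 2) (Iic (-1)) := by
    have hdom : IntegrableOn (fun u : ℝ => (|a| * t) ^ 2 * (-u) ^ (2 * a - 2)) (Iic (-1)) := by
      have h1 : IntegrableOn (fun x : ℝ => x ^ (2 * a - 2)) (Ioi 1) :=
        integrableOn_Ioi_rpow_of_lt (by linarith) one_pos
      have h2 := integrableOn_comp_neg measurableSet_Ioi h1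
      have h3 : (Neg.neg ⁻¹' Ioi (1:ℝ)) = Iio (-1) := by
        ext x; simp [Set.mem_preimage, lt_neg]
      rw [h3] at h2
      exact (h2.congr_set_ae Iio_ae_eq_Iic.symm).const_mul _
    refine Integrable.mono' hdom hmeas.restrict ?_
    filter_upwards [ae_restrict_mem measurableSet_Iic] with u hu
    rw [Real.norm_eq_abs, abs_of_nonneg (sq_nonneg _)]
    exact sq_bound_far (by linarith) ht (by simp at hu; linarith)
  -- Part 2 : on Ioc (-1) 0
  have part2 : IntegrableOn (fun u => (F a t u) ^ 2) (Ioc (-1) 0) := by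
    have hIoo : IntegrableOn (fun u => (F a t u) ^ 2) (Ioo (-1) 0) := by
      have hd1 : IntegrableOn (fun u : ℝ => (t - u) ^ (2 * a)) (Ioo (-1) 0) := by
        have hc : ContinuousOn (fun u : ℝ => (t - u) ^ (2 * a)) (Icc (-1) 0) := by
          apply ContinuousOn.rpow_const
          · exact (continuous_const.sub continuous_id).continuousOn
          · intro x hx
            exact Or.inl (ne_of_gt (by linarith [hx.2] : (0:ℝ) < t - x))
        exact (hc.integrableOn_compact' isCompact_Icc measurableSet_Icc).mono_set
          Ioo_subset_Icc_self
      have hd2 : IntegrableOn (fun u : ℝ => (-u) ^ (2 * a)) (Ioo (-1) 0) := by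
        have h1 : IntegrableOn (fun x : ℝ => x ^ (2 * a)) (Ioc 0 1) := by
          have h0 := intervalIntegral.intervalIntegrable_rpow'
            (a := (0:ℝ)) (b := 1) (r := 2 * a) (by linarith)
          rwa [intervalIntegrable_iff, Set.uIoc_of_le zero_le_one] at h0
        have h2 := integrableOn_comp_neg measurableSet_Ioc h1
        have h3 : (Neg.neg ⁻¹' Ioc (0:ℝ) 1) = Ico (-1) 0 := by
          ext x
          simp only [Set.mem_preimage, Set.mem_Ioc, Set.mem_Ico]
          constructor <;> intro h <;> exact ⟨by linarith [h.1, h.2], by linarith [h.1, h.2]⟩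
        rw [h3] at h2
        exact h2.mono_set Ioo_subset_Ico_self
      have hdom := (hd1.const_mul (2:ℝ)).add (hd2.const_mul (2:ℝ))
      refine Integrable.mono' hdom hmeas.restrict ?_
      filter_upwards [ae_restrict_mem measurableSet_Ioo] with u hu
      have hu2 : u < 0 := hu.2
      have hA : max (t - u) 0 = t - u := max_eq_left (by linarith)
      have hB : max (-u) 0 = -u := max_eq_left (by linarith)
      rw [Real.norm_eq_abs, abs_of_nonneg (sq_nonneg _)]
      unfold F
      simp only [Pi.add_apply]
      rw [hA, hB, ← rpow_sq (by linarith : (0:ℝ) ≤ t - u) ha0,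
        ← rpow_sq (by linarith : (0:ℝ) ≤ -u) ha0]
      nlinarith [sq_nonneg ((t - u) ^ a + (-u) ^ a)]
    exact hIoo.congr_set_ae Ioo_ae_eq_Ioc.symm
  -- Part 3a : on Ioc 0 t
  have part3a : IntegrableOn (fun u => (F a t u) ^ 2) (Ioc 0 t) := by
    have h1 : IntervalIntegrable (fun x : ℝ => x ^ (2 * a)) volume 0 t :=
      intervalIntegral.intervalIntegrable_rpow' (by linarith)
    have h2 := (h1.comp_sub_left t).symm
    rw [sub_zero, sub_self] at h2
    rw [intervalIntegrable_iff, Set.uIoc_of_le ht.le] at h2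
    refine h2.congr_fun ?_ measurableSet_Ioc
    intro u hu
    show (t - u) ^ (2 * a) = F a t u ^ 2
    rcases eq_or_lt_of_le hu.2 with h | h
    · rw [h, sub_self, Real.zero_rpow (mul_ne_zero two_ne_zero ha0), F_vanish ht le_rfl]
      norm_num
    · have hA : max (t - u) 0 = t - u := max_eq_left (by linarith)
      have hB : max (-u) 0 = 0 := max_eq_right (by linarith [hu.1])
      rw [← rpow_sq (by linarith : (0:ℝ) ≤ t - u) ha0]
      unfold F
      rw [hA, hB, Real.zero_rpow ha0, sub_zero]
  -- Part 3b : on Ioi t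
  have part3b : IntegrableOn (fun u => (F a t u) ^ 2) (Ioi t) := by
    refine integrableOn_zero.congr_fun ?_ measurableSet_Ioi
    intro u hu
    show (0:ℝ) = F a t u ^ 2
    rw [F_vanish ht (le_of_lt hu)]
    norm_num
  rw [← integrableOn_univ]
  have hsub : (univ : Set ℝ) ⊆ Iic (-1) ∪ (Ioc (-1) 0 ∪ (Ioc 0 t ∪ Ioi t)) := by
    intro x _
    simp only [Set.mem_union, Set.mem_Iic, Set.mem_Ioc, Set.mem_Ioi]
    rcases le_or_gt x (-1) with h | h
    · exact Or.inl h
    rcases le_or_gt x 0 with h2 | h2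
    · exact Or.inr (Or.inl ⟨h, h2⟩)
    rcases le_or_gt x t with h3 | h3
    · exact Or.inr (Or.inr (Or.inl ⟨h2, h3⟩))
    · exact Or.inr (Or.inr (Or.inr h3))
  exact (part1.union (part2.union (part3a.union part3b))).mono_set hsub


lemma prod_integrable {a : ℝ} (ha1 : -(1/2) < a) (ha2 : a < 1/2) (ha0 : a ≠ 0)
    {s t : ℝ} (hs : 0 < s) (ht : 0 < t) :
    Integrable (fun u => F a t u * F a s u) := by
  have h1 := sq_integrable ha1 ha2 ha0 ht
  have h2 := sq_integrable ha1 ha2 ha0 hs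
  refine Integrable.mono' ((h1.add h2).const_mul (1/2))
    (((measF a t).mul (measF a s)).aestronglyMeasurable) ?_
  filter_upwards with u
  rw [Real.norm_eq_abs, abs_mul]
  simp only [Pi.add_apply]
  nlinarith [sq_nonneg (|F a t u| - |F a s u|), sq_abs (F a t u), sq_abs (F a s u),
    abs_nonneg (F a t u), abs_nonneg (F a s u)]

lemma integral_sq_scale {a : ℝ} (ha1 : -(1/2) < a) (ha0 : a ≠ 0) {t : ℝ} (ht : 0 ≤ t) :
    ∫ u, (F a t u) ^ 2 = t ^ (2 * a + 1) * ∫ u, (F a 1 u) ^ 2 := by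
  rcases eq_or_lt_of_le ht with h | h
  · rw [← h]
    simp only [F_zero]
    rw [Real.zero_rpow (by intro hc; exact absurd (by linarith : a = -(1/2)) (by rintro rfl; linarith) : 2 * a + 1 ≠ 0)]
    simp
  · have key := MeasureTheory.Measure.integral_comp_mul_left (fun u => (F a t u) ^ 2) t
    have e1 : (fun x : ℝ => (F a t (t * x)) ^ 2) = fun x => t ^ (2 * a) * (F a 1 x) ^ 2 := by
      funext x
      rw [F_scale h, mul_pow, rpow_sq h.le ha0]
    rw [e1, integral_const_mul, smul_eq_mul, abs_inv, abs_of_pos h] at key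
    have ht0 : t ≠ 0 := ne_of_gt h
    rw [Real.rpow_add_one ht0]
    field_simp at key
    nlinarith [key]

lemma key_identity {a : ℝ} (ha1 : -(1/2) < a) (ha2 : a < 1/2) (ha0 : a ≠ 0)
    {s t : ℝ} (hs : 0 < s) (hst : s ≤ t) :
    ∫ u, F a t u * F a s u
      = (∫ u, (F a 1 u) ^ 2) *
        ((1/2) * (t ^ (2*a+1) + s ^ (2*a+1) - (t - s) ^ (2*a+1))) := by
  have ht : 0 < t := lt_of_lt_of_le hs hst
  have h1 := sq_integrable ha1 ha2 ha0 ht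
  have h2 := sq_integrable ha1 ha2 ha0 hs
  have h3 : Integrable (fun u => (F a (t - s) (u - s)) ^ 2) := by
    rcases eq_or_lt_of_le hst with h | h
    · have he : (fun u : ℝ => (F a (t - s) (u - s)) ^ 2) = fun _ => 0 := by
        funext u; rw [← h, sub_self, F_zero]; norm_num
      rw [he]; exact integrable_zero _ _ _
    · exact (sq_integrable ha1 ha2 ha0 (by linarith)).comp_sub_right s
  have pointwise : (fun u => F a t u * F a s u)
      = fun u => (1/2) * ((F a t u) ^ 2 + (F a s u) ^ 2 - (F a (t - s) (u - s)) ^ 2) := by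
    funext u; rw [← F_sub]; ring
  have hadd : Integrable (fun u => F a t u ^ 2 + F a s u ^ 2) := h1.add h2
  rw [pointwise, integral_const_mul, integral_sub hadd h3, integral_add h1 h2,
    integral_sub_right_eq_self (fun u => (F a (t - s) u) ^ 2) s,
    integral_sq_scale ha1 ha0 ht.le, integral_sq_scale ha1 ha0 hs.le,
    integral_sq_scale ha1 ha0 (by linarith : (0:ℝ) ≤ t - s)]
  ring

lemma I1_pos {a : ℝ} (ha1 : -(1/2) < a) (ha2 : a < 1/2) (ha0 : a ≠ 0) :
    0 < ∫ u, (F a 1 u) ^ 2 := by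
  have hint := sq_integrable ha1 ha2 ha0 one_pos
  have hle : ∫ u in Ioo (0:ℝ) 1, (F a 1 u) ^ 2 ≤ ∫ u, (F a 1 u) ^ 2 :=
    setIntegral_le_integral hint (Filter.Eventually.of_forall fun u => sq_nonneg _)
  refine lt_of_lt_of_le ?_ hle
  have heq : ∫ u in Ioo (0:ℝ) 1, (F a 1 u) ^ 2 = ∫ u in Ioo (0:ℝ) 1, (1 - u) ^ (2*a) := by
    refine setIntegral_congr_fun measurableSet_Ioo ?_
    intro u hu
    show (F a 1 u) ^ 2 = (1 - u) ^ (2*a)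
    unfold F
    rw [max_eq_left (by linarith [hu.2] : (0:ℝ) ≤ 1 - u),
      max_eq_right (by linarith [hu.1] : -u ≤ 0),
      Real.zero_rpow ha0, sub_zero, rpow_sq (by linarith [hu.2]) ha0]
  rw [heq]
  have h2a1 : (2*a+1) ≠ 0 := by intro hc; exact absurd (by linarith : a = -(1/2)) (by rintro rfl; linarith)
  have hIoc : ∫ u in Ioo (0:ℝ) 1, (1 - u) ^ (2*a) = ∫ u in (0:ℝ)..1, (1 - u) ^ (2*a) := by
    rw [intervalIntegral.integral_of_le zero_le_one, integral_Ioc_eq_integral_Ioo]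
  rw [hIoc]
  have hcs := intervalIntegral.integral_comp_sub_left (a := (0:ℝ)) (b := 1)
    (fun x : ℝ => x ^ (2*a)) 1
  simp only [sub_zero, sub_self] at hcs
  rw [hcs, integral_rpow (Or.inl (by linarith : (-1:ℝ) < 2*a))]
  rw [Real.one_rpow, Real.zero_rpow h2a1]
  have hpos : 0 < 2*a+1 := by linarith
  positivity

end MVNaux

/-- Mandelbrot–Van Ness covariance identity: for `H ∈ (0,1)`, `H ≠ 1/2`, there is `C_H > 0`
with, for all `0 < s ≤ t`, the stated integrands integrable and
`∫_{−∞}^0 ((t−u)^(H−1/2) − (−u)^(H−1/2))((s−u)^(H−1/2) − (−u)^(H−1/2)) du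
 + ∫_0^s (t−u)^(H−1/2)(s−u)^(H−1/2) du = C_H·(1/2)(t^(2H) + s^(2H) − (t−s)^(2H))`. -/
theorem stmt_15 (H : ℝ) (h0 : 0 < H) (h1 : H < 1) (hne : H ≠ 1/2) :
    ∃ C : ℝ, 0 < C ∧ ∀ s t : ℝ, 0 < s → s ≤ t →
      (IntegrableOn (fun u : ℝ =>
          ((t - u) ^ (H - 1/2) - (-u) ^ (H - 1/2)) *
          ((s - u) ^ (H - 1/2) - (-u) ^ (H - 1/2))) (Set.Iio (0:ℝ)) ∧
       IntegrableOn (fun u : ℝ => (t - u) ^ (H - 1/2) * (s - u) ^ (H - 1/2)) (Set.Ioo 0 s)) ∧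
      ((∫ u in Set.Iio (0:ℝ),
          ((t - u) ^ (H - 1/2) - (-u) ^ (H - 1/2)) *
          ((s - u) ^ (H - 1/2) - (-u) ^ (H - 1/2))) +
        ∫ u in Set.Ioo (0:ℝ) s, (t - u) ^ (H - 1/2) * (s - u) ^ (H - 1/2)) =
        C * ((1/2) * (t ^ (2*H) + s ^ (2*H) - (t - s) ^ (2*H))) := by
  set a := H - 1/2 with ha_def
  have ha1 : -(1/2) < a := by rw [ha_def]; linarith
  have ha2 : a < 1/2 := by rw [ha_def]; linarith
  have ha0 : a ≠ 0 := by rw [ha_def]; intro hc; exact hne (by linarith)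
  refine ⟨∫ u, (MVNaux.F a 1 u) ^ 2, MVNaux.I1_pos ha1 ha2 ha0, ?_⟩
  intro s t hs hst
  have ht : 0 < t := lt_of_lt_of_le hs hst
  have hprod := MVNaux.prod_integrable ha1 ha2 ha0 hs ht
  have eqIio : ∀ u ∈ Set.Iio (0:ℝ), MVNaux.F a t u * MVNaux.F a s u =
      ((t - u) ^ a - (-u) ^ a) * ((s - u) ^ a - (-u) ^ a) := by
    intro u hu
    have hu0 : u < 0 := hu
    unfold MVNaux.F
    rw [max_eq_left (by linarith : (0:ℝ) ≤ t - u),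
      max_eq_left (by linarith : (0:ℝ) ≤ -u),
      max_eq_left (by linarith : (0:ℝ) ≤ s - u)]
  have eqIoo : ∀ u ∈ Set.Ioo (0:ℝ) s, MVNaux.F a t u * MVNaux.F a s u =
      (t - u) ^ a * (s - u) ^ a := by
    intro u hu
    unfold MVNaux.F
    rw [max_eq_left (by linarith [hu.2] : (0:ℝ) ≤ t - u),
      max_eq_left (by linarith [hu.2] : (0:ℝ) ≤ s - u),
      max_eq_right (by linarith [hu.1] : -u ≤ 0),
      Real.zero_rpow ha0, sub_zero, sub_zero]
  refine ⟨⟨hprod.integrableOn.congr_fun eqIio measurableSet_Iio,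
          hprod.integrableOn.congr_fun eqIoo measurableSet_Ioo⟩, ?_⟩
  have e1 : ∫ u in Set.Iio (0:ℝ),
      ((t - u) ^ a - (-u) ^ a) * ((s - u) ^ a - (-u) ^ a)
      = ∫ u in Set.Iio (0:ℝ), MVNaux.F a t u * MVNaux.F a s u :=
    setIntegral_congr_fun measurableSet_Iio fun u hu => (eqIio u hu).symm
  have e2 : ∫ u in Set.Ioo (0:ℝ) s, (t - u) ^ a * (s - u) ^ a
      = ∫ u in Set.Ioo (0:ℝ) s, MVNaux.F a t u * MVNaux.F a s u :=
    setIntegral_congr_fun measurableSet_Ioo fun u hu => (eqIoo u hu).symm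
  rw [e1, e2]
  have splitR : ∫ u in Set.Ici (0:ℝ), MVNaux.F a t u * MVNaux.F a s u
      = ∫ u in Set.Ioo (0:ℝ) s, MVNaux.F a t u * MVNaux.F a s u := by
    have hunion : Set.Ico (0:ℝ) s ∪ Set.Ici s = Set.Ici 0 := Set.Ico_union_Ici_eq_Ici hs.le
    have hdisj : Disjoint (Set.Ico (0:ℝ) s) (Set.Ici s) :=
      Set.disjoint_left.2 fun x hx hx2 => absurd hx.2 (not_lt.2 hx2)
    rw [← hunion, setIntegral_union hdisj measurableSet_Ici
      hprod.integrableOn hprod.integrableOn]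
    have hz : ∫ u in Set.Ici s, MVNaux.F a t u * MVNaux.F a s u = 0 :=
      setIntegral_eq_zero_of_forall_eq_zero fun u hu => by
        rw [MVNaux.F_vanish hs hu]; ring
    rw [hz, add_zero, integral_Ico_eq_integral_Ioo]
  have total := intervalIntegral.integral_Iio_add_Ici (μ := volume) (b := (0:ℝ))
    hprod.integrableOn hprod.integrableOn
  rw [splitR] at total
  rw [total, MVNaux.key_identity ha1 ha2 ha0 hs hst]
  have hexp : 2*a+1 = 2*H := by rw [ha_def]; ring
  rw [hexp]
end
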